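/- arXiv:2203.01491 — 8 statements merged into one kernel-verified Lean document; each statement's English description precedes it below -/
import Mathlib

section
/- Eluder counting lemma: let X be a type, F a nonempty set of functions X → ℝ, z_1, …, z_n a sequence in X, and let β > 0, ε > 0. For each k ∈ {1,…,n} define the width b_k = sup{ |f₁(z_k) − f₂(z_k)| : f₁, f₂ ∈ F, ∑_{i<k} (f₁(z_i) − f₂(z_i))² ≤ 100β }. Then the number of indices k with b_k > ε satisfies |{ k : b_k > ε }| ≤ (100β/ε² + 1) · dim_E(F, ε). -/
open scoped ENNReal

/-- The data-dependent norm `‖f‖_Z = (∑_{x ∈ Z} f(x)²)^{1/2}` of a function along a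
finite sequence of points (given as a list). -/
noncomputable def seqNorm {X : Type*} (f : X → ℝ) (Z : List X) : ℝ :=
  Real.sqrt ((Z.map fun x => f x ^ 2).sum)

/-- `x` is `ε`-dependent on the sequence `Z` with respect to the function class `F`:
any two functions of `F` that are `ε`-close along `Z` are `ε`-close at `x`. -/
def epsDep {X : Type*} (F : Set (X → ℝ)) (ε : ℝ) (x : X) (Z : List X) : Prop :=
  ∀ f₁ ∈ F, ∀ f₂ ∈ F, seqNorm (fun y => f₁ y - f₂ y) Z ≤ ε → |f₁ x - f₂ x| ≤ ε

/-- A list is an `ε`-eluder sequence for `F` if, for some `ε' ≥ ε`, each of its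
elements is `ε'`-independent of its predecessors with respect to `F`. -/
def isEluderSeq {X : Type*} (F : Set (X → ℝ)) (ε : ℝ) (L : List X) : Prop :=
  ∃ ε' ≥ ε, ∀ k : Fin L.length, ¬ epsDep F ε' (L.get k) (L.take (k : ℕ))

/-- The `ε`-eluder dimension of `F`: the length of the longest `ε`-eluder sequence
(possibly `⊤`). -/
noncomputable def eluderDim {X : Type*} (F : Set (X → ℝ)) (ε : ℝ) : ℕ∞ :=
  ⨆ L ∈ {L : List X | isEluderSeq F ε L}, (L.length : ℕ∞)

/-- Auxiliary: a list of indices whose image under `z` is a pointwise-independent sequence. -/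
def GoodIdx {X : Type*} (F : Set (X → ℝ)) (ε : ℝ) (z : ℕ → X) (L : List ℕ) : Prop :=
  ∀ k : Fin L.length, ¬ epsDep F ε (z (L.get k)) ((L.take (k : ℕ)).map z)

lemma goodIdx_isEluderSeq {X : Type*} {F : Set (X → ℝ)} {ε : ℝ} {z : ℕ → X} {L : List ℕ}
    (h : GoodIdx F ε z L) : isEluderSeq F ε (L.map z) := by
  refine ⟨ε, le_rfl, fun k => ?_⟩
  have hk : (k : ℕ) < L.length := by simpa using k.isLt
  have h2 := h ⟨k, hk⟩
  simpa [List.getElem_map, ← List.map_take] using h2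

lemma goodIdx_append {X : Type*} {F : Set (X → ℝ)} {ε : ℝ} {z : ℕ → X} {L : List ℕ} {i : ℕ}
    (h : GoodIdx F ε z L) (hi : ¬ epsDep F ε (z i) (L.map z)) : GoodIdx F ε z (L ++ [i]) := by
  intro k
  have hlen : (L ++ [i]).length = L.length + 1 := by simp
  rcases lt_or_ge (k : ℕ) L.length with hk | hk
  · have hget : (L ++ [i]).get k = L.get ⟨k, hk⟩ := by
      simp [List.getElem_append_left hk]
    have htake : (L ++ [i]).take (k : ℕ) = L.take (k : ℕ) :=
      List.take_append_of_le_length (le_of_lt hk)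
    rw [hget, htake]
    exact h ⟨k, hk⟩
  · have hkeq : (k : ℕ) = L.length := by
      have := k.isLt; omega
    have hget : (L ++ [i]).get k = i := by
      have h3 : (L ++ [i])[(k:ℕ)] = i := by
        rw [List.getElem_append_right hk]
        simp [hkeq]
      simpa using h3
    have htake : (L ++ [i]).take (k : ℕ) = L := by
      rw [hkeq]; exact List.take_left
    rw [hget, htake]
    exact hi

lemma multiset_map_sum {m : ℕ} (g : ℕ → ℝ) (P : Fin m → List ℕ) :
    ((∑ j, ((P j : Multiset ℕ))).map g).sum = ∑ j, ((P j).map g).sum := by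
  classical
  induction (Finset.univ : Finset (Fin m)) using Finset.cons_induction with
  | empty => simp
  | cons a s ha ih =>
    rw [Finset.sum_cons, Finset.sum_cons, Multiset.map_add, Multiset.sum_add, ih]
    simp

lemma multiset_sum_le_of_le {M N : Multiset ℕ} (g : ℕ → ℝ) (hg : ∀ i, 0 ≤ g i)
    (h : M ≤ N) : (M.map g).sum ≤ (N.map g).sum := by
  obtain ⟨C, rfl⟩ := Multiset.le_iff_exists_add.mp h
  rw [Multiset.map_add, Multiset.sum_add]
  have : 0 ≤ (C.map g).sum := Multiset.sum_nonneg (by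
    intro x hx; obtain ⟨i, _, rfl⟩ := Multiset.mem_map.mp hx; exact hg i)
  linarith

lemma aux_place {X : Type*} (F : Set (X → ℝ)) (z : ℕ → X) (β ε : ℝ) (hε : 0 < ε)
    (m : ℕ) (hm : 100 * β < (m : ℝ) * ε ^ 2) :
    ∀ (l : List ℕ), l.Pairwise (· < ·) →
      (∀ k ∈ l, 1 ≤ k ∧ ∃ f₁ ∈ F, ∃ f₂ ∈ F,
        (∑ i ∈ Finset.Ico 1 k, (f₁ (z i) - f₂ (z i)) ^ 2) ≤ 100 * β ∧
        ε < |f₁ (z k) - f₂ (z k)|) →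
      ∀ (P : Fin m → List ℕ), (∀ j, GoodIdx F ε z (P j)) →
      (∑ j, ((P j : Multiset ℕ))).Nodup →
      (∀ i ∈ (∑ j, ((P j : Multiset ℕ))), 1 ≤ i ∧ ∀ k ∈ l, i < k) →
      ∃ Q : Fin m → List ℕ, (∀ j, GoodIdx F ε z (Q j)) ∧
        ∑ j, (Q j).length = (∑ j, (P j).length) + l.length := by
  intro l
  induction l with
  | nil => exact fun _ _ P hG _ _ => ⟨P, hG, by simp⟩
  | cons k l ih =>
    intro hsort hl P hG hnd hbel
    obtain ⟨hk1, f₁, hf₁, f₂, hf₂, hsum, hgap⟩ := hl k List.mem_cons_self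
    set g : ℕ → ℝ := fun i => (f₁ (z i) - f₂ (z i)) ^ 2 with hg
    have hgnn : ∀ i, 0 ≤ g i := fun i => sq_nonneg _
    have hβnn : (0:ℝ) ≤ 100 * β := le_trans (Finset.sum_nonneg fun i _ => sq_nonneg _) hsum
    have hmpos : 0 < m := by
      by_contra h
      push_neg at h
      have : m = 0 := by omega
      rw [this] at hm
      simp at hm
      linarith
    have hexj : ∃ j, ¬ epsDep F ε (z k) ((P j).map z) := by
      by_contra hall
      push_neg at hall
      have hper : ∀ j, ε ^ 2 < ((P j).map g).sum := by
        intro j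
        have hdep := hall j f₁ hf₁ f₂ hf₂
        have hnm : ε < seqNorm (fun y => f₁ y - f₂ y) ((P j).map z) := by
          by_contra hc
          push_neg at hc
          exact absurd (hdep hc) (not_le.mpr hgap)
        have heq : seqNorm (fun y => f₁ y - f₂ y) ((P j).map z)
            = Real.sqrt (((P j).map g).sum) := by
          simp [seqNorm, List.map_map, Function.comp_def, hg]
        rw [heq] at hnm
        exact (Real.lt_sqrt hε.le).mp hnm
      have huniv : (Finset.univ : Finset (Fin m)).Nonempty := by
        haveI : Nonempty (Fin m) := Fin.pos_iff_nonempty.mp hmpos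
        exact Finset.univ_nonempty
      have h1 : (m : ℝ) * ε ^ 2 < ∑ j, ((P j).map g).sum := by
        have := Finset.sum_lt_sum_of_nonempty huniv (fun j _ => hper j)
        simpa [Finset.sum_const, nsmul_eq_mul] using this
      have hMle : (∑ j, ((P j : Multiset ℕ))) ≤ (Finset.Ico 1 k).val := by
        rw [Multiset.le_iff_subset hnd]
        intro i hi
        obtain ⟨hi1, hik⟩ := hbel i hi
        have hik' := hik k List.mem_cons_self
        rw [Finset.mem_val, Finset.mem_Ico]
        exact ⟨hi1, hik'⟩
      have h2 : ∑ j, ((P j).map g).sum ≤ ∑ i ∈ Finset.Ico 1 k, g i := by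
        rw [← multiset_map_sum g P]
        exact multiset_sum_le_of_le g hgnn hMle
      have h3 : ∑ i ∈ Finset.Ico 1 k, g i ≤ 100 * β := hsum
      linarith
    obtain ⟨j, hj⟩ := hexj
    classical
    set P' := Function.update P j (P j ++ [k]) with hP'
    have hsort' := (List.pairwise_cons.mp hsort)
    have hG' : ∀ j', GoodIdx F ε z (P' j') := by
      intro j'
      by_cases h : j' = j
      · subst h
        rw [hP', Function.update_self]
        exact goodIdx_append (hG j') hj
      · rw [hP', Function.update_of_ne h]
        exact hG j'
    have hmul : ∀ j', (↑(P' j') : Multiset ℕ) = ↑(P j') + (if j' = j then {k} else 0) := by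
      intro j'
      by_cases h : j' = j
      · subst h
        rw [hP', Function.update_self]
        simp only [if_pos rfl]
        rfl
      · rw [hP', Function.update_of_ne h]
        simp [h]
    have hMsum : (∑ j', ((P' j' : Multiset ℕ))) = (∑ j', ((P j' : Multiset ℕ))) + {k} := by
      simp only [hmul]
      rw [Finset.sum_add_distrib]
      congr 1
      simp
    have hkM : k ∉ (∑ j', ((P j' : Multiset ℕ))) := by
      intro hk
      exact absurd ((hbel k hk).2 k List.mem_cons_self) (lt_irrefl k)
    have hnd' : (∑ j', ((P' j' : Multiset ℕ))).Nodup := by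
      rw [hMsum, Multiset.nodup_add]
      refine ⟨hnd, Multiset.nodup_singleton k, ?_⟩
      rw [_root_.disjoint_comm, Multiset.singleton_disjoint]
      exact hkM
    have hbel' : ∀ i ∈ (∑ j', ((P' j' : Multiset ℕ))), 1 ≤ i ∧ ∀ k' ∈ l, i < k' := by
      intro i hi
      rw [hMsum, Multiset.mem_add] at hi
      rcases hi with hi | hi
      · obtain ⟨h1, h2⟩ := hbel i hi
        exact ⟨h1, fun k' hk' => h2 k' (List.mem_cons_of_mem k hk')⟩
      · rw [Multiset.mem_singleton] at hi
        subst hi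
        exact ⟨hk1, fun k' hk' => hsort'.1 k' hk'⟩
    have hlen' : ∑ j', (P' j').length = (∑ j', (P j').length) + 1 := by
      have : ∀ j', (P' j').length = (P j').length + (if j' = j then 1 else 0) := by
        intro j'
        by_cases h : j' = j
        · subst h; rw [hP', Function.update_self]; simp
        · rw [hP', Function.update_of_ne h]; simp [h]
      simp only [this]
      rw [Finset.sum_add_distrib]
      congr 1
      simp
    obtain ⟨Q, hQ, hQlen⟩ := ih hsort'.2 (fun k' hk' => hl k' (List.mem_cons_of_mem k hk'))
      P' hG' hnd' hbel'
    refine ⟨Q, hQ, ?_⟩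
    rw [hQlen, hlen']
    simp [List.length_cons]
    omega

/-- **Eluder counting lemma.** With widths
`b k = sup {|f₁(z_k) − f₂(z_k)| : f₁, f₂ ∈ F, ∑_{i<k} (f₁(z_i) − f₂(z_i))² ≤ 100 β}`,
the number of indices `k ∈ {1,…,n}` with `b k > ε` is at most
`(100 β / ε² + 1) · dim_E(F, ε)` (an inequality in `ℝ≥0∞` so that an infinite eluder
dimension is allowed). -/
theorem stmt_3 {X : Type*} (F : Set (X → ℝ)) (hF : F.Nonempty)
    (n : ℕ) (z : ℕ → X) (β ε : ℝ) (hβ : 0 < β) (hε : 0 < ε)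
    (b : ℕ → ℝ)
    (hb : ∀ k ∈ Finset.Icc 1 n, b k = sSup {y : ℝ | ∃ f₁ ∈ F, ∃ f₂ ∈ F,
      (∑ i ∈ Finset.Ico 1 k, (f₁ (z i) - f₂ (z i)) ^ 2) ≤ 100 * β ∧
      y = |f₁ (z k) - f₂ (z k)|}) :
    ((((Finset.Icc 1 n).filter fun k => ε < b k).card : ℕ) : ℝ≥0∞) ≤
      ENNReal.ofReal (100 * β / ε ^ 2 + 1) * (eluderDim F ε : ℝ≥0∞) := by

  classical
  set T := (Finset.Icc 1 n).filter fun k => ε < b k with hT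
  set l := T.sort (· ≤ ·) with hlst
  have hsort : l.Pairwise (· < ·) := (Finset.sortedLT_sort T).pairwise
  have hllen : l.length = T.card := Finset.length_sort _
  -- the key property of elements of `l`
  have hl : ∀ k ∈ l, 1 ≤ k ∧ ∃ f₁ ∈ F, ∃ f₂ ∈ F,
      (∑ i ∈ Finset.Ico 1 k, (f₁ (z i) - f₂ (z i)) ^ 2) ≤ 100 * β ∧
      ε < |f₁ (z k) - f₂ (z k)| := by
    intro k hk
    rw [hlst, Finset.mem_sort] at hk
    rw [hT, Finset.mem_filter, Finset.mem_Icc] at hk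
    obtain ⟨⟨hk1, hkn⟩, hkb⟩ := hk
    refine ⟨hk1, ?_⟩
    have hmem : k ∈ Finset.Icc 1 n := Finset.mem_Icc.mpr ⟨hk1, hkn⟩
    rw [hb k hmem] at hkb
    obtain ⟨f, hf⟩ := hF
    have hne : {y : ℝ | ∃ f₁ ∈ F, ∃ f₂ ∈ F,
        (∑ i ∈ Finset.Ico 1 k, (f₁ (z i) - f₂ (z i)) ^ 2) ≤ 100 * β ∧
        y = |f₁ (z k) - f₂ (z k)|}.Nonempty := by
      refine ⟨0, f, hf, f, hf, by simp; positivity, by simp⟩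
    obtain ⟨y, ⟨f₁, hf₁, f₂, hf₂, hsum, hy⟩, hεy⟩ := exists_lt_of_lt_csSup hne hkb
    exact ⟨f₁, hf₁, f₂, hf₂, hsum, hy ▸ hεy⟩
  -- handle infinite eluder dimension
  rcases eq_or_ne (eluderDim F ε) ⊤ with htop | hfin
  · rw [htop]
    have : ((⊤ : ℕ∞) : ℝ≥0∞) = ⊤ := by simp
    rw [this, ENNReal.mul_top]
    · exact le_top
    · rw [ne_eq, ENNReal.ofReal_eq_zero, not_le]
      positivity
  · obtain ⟨d, hd0⟩ := (WithTop.ne_top_iff_exists).mp hfin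
    have hd : (d : ℕ∞) = eluderDim F ε := by exact_mod_cast hd0
    set m : ℕ := ⌊100 * β / ε ^ 2⌋₊ + 1 with hmdef
    have hε2 : (0:ℝ) < ε ^ 2 := by positivity
    have hm : 100 * β < (m : ℝ) * ε ^ 2 := by
      have h1 : 100 * β / ε ^ 2 < (m : ℝ) := by
        rw [hmdef]
        push_cast
        exact Nat.lt_floor_add_one _
      calc 100 * β = (100 * β / ε ^ 2) * ε ^ 2 := by field_simp
        _ < (m : ℝ) * ε ^ 2 := by exact mul_lt_mul_of_pos_right h1 hε2
    obtain ⟨Q, hQ, hQlen⟩ := aux_place F z β ε hε m hm l hsort hl (fun _ => [])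
      (fun j k => absurd k.isLt (by simp)) (by simp) (by simp)
    have hQd : ∀ j, (Q j).length ≤ d := by
      intro j
      have hel : isEluderSeq F ε ((Q j).map z) := goodIdx_isEluderSeq (hQ j)
      have hle : (((Q j).map z).length : ℕ∞) ≤ eluderDim F ε :=
        le_iSup₂ (f := fun (L : List X) (_ : L ∈ {L : List X | isEluderSeq F ε L}) =>
          (L.length : ℕ∞)) ((Q j).map z) hel
      rw [← hd] at hle
      have : (((Q j).map z).length : ℕ∞) ≤ (d : ℕ∞) := hle
      rw [Nat.cast_le] at this
      simpa using this
    simp only [List.length_nil, Finset.sum_const, smul_zero, zero_add] at hQlen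
    have hcard : T.card ≤ m * d := by
      rw [← hllen, ← hQlen]
      calc ∑ j, (Q j).length ≤ ∑ _j : Fin m, d := Finset.sum_le_sum fun j _ => hQd j
        _ = m * d := by simp [Finset.sum_const, mul_comm]
    -- cast to ℝ≥0∞
    rw [← hd]
    have hcast : ((d : ℕ∞) : ℝ≥0∞) = (d : ℝ≥0∞) := ENat.toENNReal_coe d
    rw [hcast]
    calc ((T.card : ℕ) : ℝ≥0∞) ≤ ((m * d : ℕ) : ℝ≥0∞) := by exact_mod_cast hcard
      _ = (m : ℝ≥0∞) * (d : ℝ≥0∞) := by push_cast; ring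
      _ ≤ ENNReal.ofReal (100 * β / ε ^ 2 + 1) * (d : ℝ≥0∞) := by
          apply mul_le_mul_left
          have h1 : (m : ℝ) ≤ 100 * β / ε ^ 2 + 1 := by
            rw [hmdef]
            push_cast
            have := Nat.floor_le (a := 100 * β / ε ^ 2) (by positivity)
            linarith
          calc (m : ℝ≥0∞) = ENNReal.ofReal (m : ℝ) := by
                rw [ENNReal.ofReal_natCast]
            _ ≤ _ := ENNReal.ofReal_le_ofReal h1
end

section
/- Arithmetic summation bound for sorted widths: there exists an absolute constant C > 0 such that the following holds. For all n ∈ ℕ with n ≥ 1, all real d ≥ 1, β > 0, H ≥ 0, and every nonincreasing sequence b_1 ≥ b_2 ≥ … ≥ b_n with 0 ≤ b_k ≤ H + 1 for all k, if every index k with b_k ≥ 1/n satisfies k ≤ (100β/b_k² + 1)·d, then ∑_{k=1}^n b_k ≤ 1 + (H+1)·d + C·√(d·n·β). -/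
lemma aux_sqrtsum (t : ℕ) : ∑ i ∈ Finset.range t, (1:ℝ)/Real.sqrt (i+1) ≤ 2*Real.sqrt t := by
  induction t with
  | zero => simp
  | succ m ih =>
    rw [Finset.sum_range_succ]
    have hr : Real.sqrt ((m:ℝ)+1) > 0 := Real.sqrt_pos.mpr (by positivity)
    have hrs : (Real.sqrt ((m:ℝ)+1))^2 = (m:ℝ)+1 := Real.sq_sqrt (by positivity)
    have hss : (Real.sqrt (m:ℝ))^2 = (m:ℝ) := Real.sq_sqrt (by positivity)
    have hs0 : 0 ≤ Real.sqrt (m:ℝ) := Real.sqrt_nonneg _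
    have key : (1:ℝ)/Real.sqrt ((m:ℝ)+1) ≤ 2*(Real.sqrt ((m:ℝ)+1) - Real.sqrt (m:ℝ)) := by
      rw [div_le_iff₀ hr]
      nlinarith [sq_nonneg (Real.sqrt ((m:ℝ)+1) - Real.sqrt (m:ℝ))]
    have hcast : ((m:ℝ)+1) = ((m+1 : ℕ) : ℝ) := by push_cast; ring
    rw [← hcast]
    linarith

lemma aux_min (A B t x : ℝ) (hA : 0 ≤ A) (hB : 0 ≤ B) (ht0 : 0 < t) (ht1 : t ≤ 1)
    (hxA : x ≤ A) (hx : 0 ≤ x) (h : x^2*t ≤ B^2) : x ≤ (1-t)*A + B := by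
  have hst : x * Real.sqrt t ≤ B := by
    have h2 : (x*Real.sqrt t)^2 ≤ B^2 := by
      rw [mul_pow, Real.sq_sqrt ht0.le]; linarith
    nlinarith [mul_nonneg hx (Real.sqrt_nonneg t)]
  have hs1 : Real.sqrt t ≤ 1 := by
    rw [show (1:ℝ) = Real.sqrt 1 by simp]
    exact Real.sqrt_le_sqrt ht1
  have hs0 : 0 ≤ Real.sqrt t := Real.sqrt_nonneg t
  have htx : t * x ≤ B := by
    have he : t * x = Real.sqrt t * (x * Real.sqrt t) := by
      have h9 : Real.sqrt t * (x * Real.sqrt t) = Real.sqrt t ^ 2 * x := by ring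
      rw [h9, Real.sq_sqrt ht0.le]
    calc t * x = Real.sqrt t * (x * Real.sqrt t) := he
    _ ≤ 1 * B := by
        apply mul_le_mul hs1 hst (mul_nonneg hx hs0) (by norm_num)
    _ = B := one_mul B
  nlinarith [mul_le_mul_of_nonneg_left hxA (by linarith : (0:ℝ) ≤ 1-t)]

/-- **Arithmetic summation bound for sorted widths.** There is an absolute constant
`C > 0` such that for all `n ≥ 1`, `d ≥ 1`, `β > 0`, `H ≥ 0` and every nonincreasing
sequence `b_1 ≥ … ≥ b_n` with `0 ≤ b_k ≤ H + 1`, if every `k` with `b_k ≥ 1/n`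
satisfies `k ≤ (100 β / b_k² + 1) · d`, then
`∑_{k=1}^n b_k ≤ 1 + (H+1) d + C √(d n β)`. -/
theorem stmt_6 : ∃ C : ℝ, 0 < C ∧
    ∀ (n : ℕ), 1 ≤ n → ∀ (d β H : ℝ), 1 ≤ d → 0 < β → 0 ≤ H →
    ∀ b : ℕ → ℝ,
    (∀ k ∈ Finset.Icc 1 n, ∀ l ∈ Finset.Icc 1 n, k ≤ l → b l ≤ b k) →
    (∀ k ∈ Finset.Icc 1 n, 0 ≤ b k ∧ b k ≤ H + 1) →
    (∀ k ∈ Finset.Icc 1 n, 1 / (n : ℝ) ≤ b k → (k : ℝ) ≤ (100 * β / (b k) ^ 2 + 1) * d) →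
    ∑ k ∈ Finset.Icc 1 n, b k ≤ 1 + (H + 1) * d + C * Real.sqrt (d * n * β) := by
  refine ⟨30, by norm_num, ?_⟩
  intro n hn d β H hd hβ hH b hmono hbnd hcon
  set D := ⌊d⌋₊ with hD
  have hd0 : (0:ℝ) ≤ d := by linarith
  have hDd : (D:ℝ) ≤ d := Nat.floor_le hd0
  have hdD : d < (D:ℝ) + 1 := Nat.lt_floor_add_one d
  have hn0 : (0:ℝ) < n := by exact_mod_cast hn
  set S := Real.sqrt (β*d) with hS
  have hS0 : (0:ℝ) ≤ S := Real.sqrt_nonneg _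
  have hSsq : S^2 = β*d := Real.sq_sqrt (by positivity)
  set g : ℕ → ℝ := fun k => if k ≤ D then H+1
    else if k = D+1 then (d-(D:ℝ))*(H+1) + 10*S
    else 10*S / Real.sqrt ((k-(D+1) : ℕ) : ℝ) with hg
  have hg0 : ∀ k, 0 ≤ g k := by
    intro k; simp only [hg]
    split_ifs
    · linarith
    · have h1 : (0:ℝ) ≤ d - D := by linarith
      have h2 : (0:ℝ) ≤ (d-(D:ℝ))*(H+1) := mul_nonneg h1 (by linarith)
      linarith
    · positivity
  have key : ∀ k ∈ Finset.Icc 1 n, b k ≤ 1/(n:ℝ) + g k := by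
    intro k hk
    obtain ⟨hb0, hbH⟩ := hbnd k hk
    have hfrac : (0:ℝ) ≤ 1/(n:ℝ) := by positivity
    by_cases h1 : 1/(n:ℝ) ≤ b k
    · have hcon' := hcon k hk h1
      have hbpos : 0 < b k := lt_of_lt_of_le (by positivity) h1
      have hkey : ((k:ℝ) - d) * (b k)^2 ≤ 100*β*d := by
        have hb2 : (b k)^2 ≠ 0 := by positivity
        have h2 : (100*β/(b k)^2 + 1)*d = 100*β*d/(b k)^2 + d := by ring
        rw [h2] at hcon'
        have h3 := mul_le_mul_of_nonneg_right
          (by linarith : (k:ℝ) - d ≤ 100*β*d/(b k)^2) (sq_nonneg (b k))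
        rwa [div_mul_cancel₀ _ hb2] at h3
      simp only [hg]
      split_ifs with h2 h3
      · linarith
      · -- k = D+1
        have hk' : (k:ℝ) = (D:ℝ)+1 := by rw [h3]; push_cast; ring
        have hmin := aux_min (H+1) (10*S) ((D:ℝ)+1-d) (b k)
          (by linarith) (by positivity) (by linarith) (by linarith) hbH hb0
          (by rw [mul_pow, hSsq]; nlinarith [hkey])
        have : (1-((D:ℝ)+1-d))*(H+1) + 10*S = (d-(D:ℝ))*(H+1) + 10*S := by ring
        linarith [hmin, this ▸ hmin]
      · -- k ≥ D+2
        have hk2 : D+2 ≤ k := by omega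
        have hjn : k - (D+1) + (D+1) = k := by omega
        have hj1 : 1 ≤ k - (D+1) := by omega
        set j : ℕ := k - (D+1) with hj
        have hjk : (k:ℝ) = (j:ℝ) + ((D:ℝ)+1) := by
          have : (j:ℝ) + ((D:ℝ)+1) = ((j + (D+1) : ℕ) : ℝ) := by push_cast; ring
          rw [this, hjn]
        have hjpos : (0:ℝ) < (j:ℝ) := by exact_mod_cast hj1
        have hjd : (j:ℝ) ≤ (k:ℝ) - d := by rw [hjk]; linarith
        have h4 : (j:ℝ) * (b k)^2 ≤ 100*β*d :=
          le_trans (mul_le_mul_of_nonneg_right hjd (sq_nonneg _)) hkey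
        have hsj : 0 < Real.sqrt (j:ℝ) := Real.sqrt_pos.mpr hjpos
        have h5 : (b k)^2 ≤ (10*S/Real.sqrt (j:ℝ))^2 := by
          rw [div_pow, mul_pow, Real.sq_sqrt hjpos.le, hSsq, le_div_iff₀ hjpos]
          nlinarith [h4]
        have h6 : b k ≤ 10*S/Real.sqrt (j:ℝ) := by
          have h60 : (0:ℝ) ≤ 10*S/Real.sqrt (j:ℝ) := by positivity
          rw [← Real.sqrt_sq hb0, ← Real.sqrt_sq h60]
          exact Real.sqrt_le_sqrt h5
        linarith
    · push_neg at h1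
      linarith [hg0 k]
  have hsum1 : ∑ k ∈ Finset.Icc 1 n, b k ≤ ∑ k ∈ Finset.Icc 1 n, (1/(n:ℝ) + g k) :=
    Finset.sum_le_sum key
  have hc : ∑ _k ∈ Finset.Icc 1 n, (1/(n:ℝ)) = 1 := by
    rw [Finset.sum_const, Nat.card_Icc, nsmul_eq_mul]
    have h9 : n + 1 - 1 = n := by omega
    rw [h9]
    field_simp
  rw [Finset.sum_add_distrib, hc] at hsum1
  set N := max n (D+1) with hN
  have hsum2 : ∑ k ∈ Finset.Icc 1 n, g k ≤ ∑ k ∈ Finset.Icc 1 N, g k :=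
    Finset.sum_le_sum_of_subset_of_nonneg
      (Finset.Icc_subset_Icc_right (le_max_left _ _)) (fun i _ _ => hg0 i)
  have hIoc : ∀ m : ℕ, Finset.Icc 1 m = Finset.Ioc 0 m := by
    intro m; rw [← Finset.Icc_add_one_left_eq_Ioc]; rfl
  have hsplit : ∑ k ∈ Finset.Ioc 0 N, g k
      = ∑ k ∈ Finset.Ioc 0 (D+1), g k + ∑ k ∈ Finset.Ioc (D+1) N, g k :=
    (Finset.sum_Ioc_consecutive _ (Nat.zero_le _) (le_max_right _ _)).symm
  have hgd1 : g (D+1) = (d-(D:ℝ))*(H+1) + 10*S := by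
    simp only [hg]
    rw [if_neg (by omega : ¬ (D+1 ≤ D))]
    simp
  have hhead : ∑ k ∈ Finset.Ioc 0 (D+1), g k = d*(H+1) + 10*S := by
    rw [Finset.sum_Ioc_succ_top (Nat.zero_le D), hgd1]
    have h5 : ∑ k ∈ Finset.Ioc 0 D, g k = (D:ℝ)*(H+1) := by
      have h51 : ∀ k ∈ Finset.Ioc 0 D, g k = H+1 := by
        intro k hk; simp only [hg]; rw [if_pos (Finset.mem_Ioc.mp hk).2]
      rw [Finset.sum_congr rfl h51, Finset.sum_const, Nat.card_Ioc, nsmul_eq_mul]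
      simp
    rw [h5]; ring
  have htail : ∑ k ∈ Finset.Ioc (D+1) N, g k ≤ 20*S*Real.sqrt (n:ℝ) := by
    rw [← Finset.Ico_add_one_add_one_eq_Ioc, Finset.sum_Ico_eq_sum_range]
    have hgval : ∀ i : ℕ, g (D+1+1+i) = 10*S * (1/Real.sqrt ((i:ℝ)+1)) := by
      intro i; simp only [hg]
      rw [if_neg (by omega), if_neg (by omega)]
      have h7 : D+1+1+i - (D+1) = i+1 := by omega
      rw [h7]; push_cast; ring
    rw [Finset.sum_congr rfl (fun i _ => hgval i), ← Finset.mul_sum]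
    have h6 := aux_sqrtsum (N+1-(D+1+1))
    have h8 : N + 1 - (D+1+1) ≤ n := by
      rcases le_total n (D+1) with h|h
      · rw [hN, max_eq_right h]; omega
      · rw [hN, max_eq_left h]; omega
    have h7 : Real.sqrt ((N+1-(D+1+1) : ℕ) : ℝ) ≤ Real.sqrt (n:ℝ) :=
      Real.sqrt_le_sqrt (by exact_mod_cast h8)
    calc 10*S * ∑ i ∈ Finset.range (N+1-(D+1+1)), (1/Real.sqrt ((i:ℝ)+1))
        ≤ 10*S * (2*Real.sqrt (n:ℝ)) := by
          apply mul_le_mul_of_nonneg_left _ (by positivity)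
          exact le_trans h6 (by linarith)
      _ = 20*S*Real.sqrt (n:ℝ) := by ring
  have hsqrt : Real.sqrt (d*(n:ℝ)*β) = S * Real.sqrt (n:ℝ) := by
    rw [hS, ← Real.sqrt_mul (by positivity : (0:ℝ) ≤ β*d)]
    congr 1; ring
  have hsn1 : (1:ℝ) ≤ Real.sqrt (n:ℝ) := by
    rw [show (1:ℝ) = Real.sqrt 1 by simp]
    exact Real.sqrt_le_sqrt (by exact_mod_cast hn)
  have hfinal : ∑ k ∈ Finset.Icc 1 n, g k ≤ d*(H+1) + 10*S + 20*S*Real.sqrt (n:ℝ) := by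
    calc ∑ k ∈ Finset.Icc 1 n, g k ≤ ∑ k ∈ Finset.Icc 1 N, g k := hsum2
      _ = ∑ k ∈ Finset.Ioc 0 N, g k := by rw [hIoc]
      _ = ∑ k ∈ Finset.Ioc 0 (D+1), g k + ∑ k ∈ Finset.Ioc (D+1) N, g k := hsplit
      _ ≤ d*(H+1) + 10*S + 20*S*Real.sqrt (n:ℝ) := by rw [hhead]; linarith [htail]
  rw [hsqrt]
  have h10 : 10*S + 20*S*Real.sqrt (n:ℝ) ≤ 30*(S*Real.sqrt (n:ℝ)) := by
    nlinarith [mul_le_mul_of_nonneg_left hsn1 (by positivity : (0:ℝ) ≤ 10*S)]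
  have hIccn : ∑ k ∈ Finset.Icc 1 n, g k ≤ d*(H+1) + 10*S + 20*S*Real.sqrt (n:ℝ) := hfinal
  linarith [hsum1, hIccn]
end

section
/- Bound on the sum of bonus functions over any set of episodes (deterministic form): there exists an absolute constant C > 0 such that the following holds. Let X be a type, H, n ∈ ℕ with H ≥ 1 and n ≥ 1, β > 0, and for each h ∈ {1,…,H} let F_h be a nonempty set of functions X → [0, H+1] and z_h^1, …, z_h^n a sequence in X. For k ∈ {1,…,n} and h ∈ {1,…,H} define b_h^k = sup{ |f₁(z_h^k) − f₂(z_h^k)| : f₁, f₂ ∈ F_h, ∑_{i<k} (f₁(z_h^i) − f₂(z_h^i))² ≤ 100β }. Then for every subset K' ⊆ {1,…,n}, ∑_{k∈K'} ∑_{h=1}^H b_h^k ≤ H + H(H+1)·d + C·H·√(d·|K'|·β), where d = max_{h∈{1,…,H}} dim_E(F_h, 1/n). -/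
open scoped ENNReal

universe u

/-- every element is `ε`-independent of its predecessors -/
def EluderList {X : Type*} (G : Set (X → ℝ)) (ε : ℝ) (L : List X) : Prop :=
  ∀ k : Fin L.length, ¬ epsDep G ε (L.get k) (L.take (k : ℕ))

lemma eluderList_nil {X : Type*} (G : Set (X → ℝ)) (ε : ℝ) : EluderList G ε ([] : List X) := by
  intro k; exact absurd k.2 (by simp)

lemma eluderList_append {X : Type*} {G : Set (X → ℝ)} {ε : ℝ} {L : List X} {x : X}
    (hL : EluderList G ε L) (hx : ¬ epsDep G ε x L) : EluderList G ε (L ++ [x]) := by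
  intro k
  have hk : (k : ℕ) < L.length + 1 := by simpa using k.2
  rcases lt_or_eq_of_le (Nat.lt_succ_iff.1 hk) with h | h
  · have hget : (L ++ [x]).get k = L.get ⟨k, h⟩ := by
      simp [List.getElem_append_left h]
    have htake : (L ++ [x]).take (k : ℕ) = L.take (k : ℕ) := by
      rw [List.take_append_of_le_length (le_of_lt h)]
    rw [hget, htake]
    exact hL ⟨k, h⟩
  · have hget : (L ++ [x]).get k = x := by
      simp [List.get_eq_getElem, h, List.getElem_concat_length]
    have htake : (L ++ [x]).take (k : ℕ) = L := by
      rw [h, List.take_append_of_le_length (le_refl _), List.take_length]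
    rw [hget, htake]
    exact hx

open Classical in
noncomputable def insertPt {X : Type*} (G : Set (X → ℝ)) (ε : ℝ) {M : ℕ}
    (g : Fin M → List X) (x : X) : Fin M → List X :=
  if h : ∃ j, ¬ epsDep G ε x (g j) then
    Function.update g h.choose (g h.choose ++ [x]) else g

noncomputable def greedy {X : Type*} (G : Set (X → ℝ)) (ε : ℝ) (M : ℕ) (p : ℕ → X) :
    List ℕ → (Fin M → List X)
  | [] => fun _ => []
  | a :: T => insertPt G ε (greedy G ε M p T) (p a)

lemma multiset_sum_map_sum {α : Type*} {M : ℕ} (g : Fin M → Multiset α) (f : α → ℝ) :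
    ((∑ j, g j).map f).sum = ∑ j, ((g j).map f).sum := by
  classical
  let φ : Multiset α →+ ℝ :=
    { toFun := fun m => (m.map f).sum
      map_zero' := by simp
      map_add' := by intro a b; simp [Multiset.map_add] }
  exact map_sum φ g Finset.univ

lemma greedy_spec {X : Type*} (G : Set (X → ℝ)) (ε Λ : ℝ) (hε : 0 < ε) (hΛ : 0 < Λ)
    (p : ℕ → X) (M : ℕ) (hM : Λ ≤ M * ε ^ 2)
    (T : List ℕ) (hT : T.Pairwise (· > ·)) (hT1 : ∀ k ∈ T, 1 ≤ k)
    (hw : ∀ k ∈ T, ∃ f₁ ∈ G, ∃ f₂ ∈ G,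
      (∑ i ∈ Finset.Ico 1 k, (f₁ (p i) - f₂ (p i)) ^ 2) ≤ Λ ∧ ε < |f₁ (p k) - f₂ (p k)|) :
    (∀ j, EluderList G ε (greedy G ε M p T j)) ∧
      (∑ j : Fin M, ((greedy G ε M p T j : Multiset X))) = ↑(T.map p) := by
  classical
  have hM0 : 0 < M := by
    by_contra h
    push_neg at h
    interval_cases M
    simp only [Nat.cast_zero, zero_mul] at hM
    linarith
  induction T with
  | nil => exact ⟨fun j => eluderList_nil G ε, by simp [greedy]⟩
  | cons a T ih =>
    obtain ⟨ihE, ihM⟩ := ih (List.Pairwise.of_cons hT)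
      (fun k hk => hT1 k (List.mem_cons_of_mem _ hk))
      (fun k hk => hw k (List.mem_cons_of_mem _ hk))
    set g := greedy G ε M p T with hg
    have hx : ∃ j, ¬ epsDep G ε (p a) (g j) := by
      by_contra hdep
      push_neg at hdep
      obtain ⟨f₁, hf₁, f₂, hf₂, hsum, hgap⟩ := hw a List.mem_cons_self
      set q : X → ℝ := fun x => (f₁ x - f₂ x) ^ 2 with hq
      have hq0 : ∀ x, 0 ≤ q x := fun x => sq_nonneg _
      have hbig : ∀ j, ε ^ 2 < ((g j).map q).sum := by
        intro j
        have h1 : ¬ seqNorm (fun y => f₁ y - f₂ y) (g j) ≤ ε := fun hle =>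
          absurd (hdep j f₁ hf₁ f₂ hf₂ hle) (not_le.mpr hgap)
        have h2 : ε < Real.sqrt (((g j).map q).sum) := by
          simpa [seqNorm, hq] using not_le.mp h1
        exact (Real.lt_sqrt hε.le).mp h2
      have hsum1 : (M : ℝ) * ε ^ 2 < ∑ j : Fin M, ((g j).map q).sum := by
        have hne : (Finset.univ : Finset (Fin M)).Nonempty := by
          simpa [Finset.univ_nonempty_iff] using Fin.pos_iff_nonempty.mp hM0
        have := Finset.sum_lt_sum_of_nonempty hne (f := fun _ : Fin M => ε ^ 2)
          (g := fun j => ((g j).map q).sum) (fun j _ => hbig j)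
        simpa [Finset.sum_const, Finset.card_univ, nsmul_eq_mul] using this
      -- the total over groups equals the sum over T
      have hsum2 : ∑ j : Fin M, ((g j).map q).sum = (T.map fun k => q (p k)).sum := by
        have h := multiset_sum_map_sum (fun j => ((g j : Multiset X))) q
        rw [ihM] at h
        simpa [Multiset.map_coe, Multiset.sum_coe, List.map_map, Function.comp_def] using h.symm
      -- T is nodup with entries in Ico 1 a (using 1 ≤ k from... need entries ≥ 1!)
      have hTnd : T.Nodup := (List.Pairwise.of_cons hT).imp (fun h => ne_of_gt h)
      have hTlt : ∀ k ∈ T, k < a := fun k hk => List.rel_of_pairwise_cons hT hk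
      have hT1' : ∀ k ∈ T, 1 ≤ k := fun k hk => hT1 k (List.mem_cons_of_mem _ hk)
      have hsum3 : (T.map fun k => q (p k)).sum ≤ ∑ i ∈ Finset.Ico 1 a, q (p i) := by
        rw [← List.sum_toFinset _ hTnd]
        apply Finset.sum_le_sum_of_subset_of_nonneg
        · intro k hk
          rw [List.mem_toFinset] at hk
          exact Finset.mem_Ico.mpr ⟨hT1' k hk, hTlt k hk⟩
        · intro i _ _; exact hq0 _
      have : (M : ℝ) * ε ^ 2 < Λ := by
        calc (M:ℝ) * ε ^ 2 < ∑ j : Fin M, ((g j).map q).sum := hsum1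
        _ = (T.map fun k => q (p k)).sum := hsum2
        _ ≤ ∑ i ∈ Finset.Ico 1 a, q (p i) := hsum3
        _ ≤ Λ := hsum
      linarith
    have hstep : greedy G ε M p (a :: T) =
        Function.update g hx.choose (g hx.choose ++ [p a]) := by
      show insertPt G ε g (p a) = _
      rw [insertPt, dif_pos hx]
    constructor
    · intro j
      rw [hstep]
      by_cases hj : j = hx.choose
      · subst hj
        rw [Function.update_self]
        exact eluderList_append (ihE _) hx.choose_spec
      · rw [Function.update_of_ne hj]
        exact ihE j
    · rw [hstep]
      have hco : ∀ j, ((Function.update g hx.choose (g hx.choose ++ [p a]) j : Multiset X))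
          = Function.update (fun j => ((g j : Multiset X))) hx.choose
              ((g hx.choose ++ [p a] : List X) : Multiset X) j :=
        fun j => Function.apply_update (β := fun _ => Multiset X)
          (fun _ (l : List X) => (l : Multiset X)) g hx.choose _ j
      rw [Finset.sum_congr rfl (fun j _ => hco j), Finset.sum_update_of_mem (Finset.mem_univ _)]
      have h2 : (↑(g hx.choose) : Multiset X)
            + ∑ x ∈ Finset.univ \ {hx.choose}, (↑(g x) : Multiset X)
          = ∑ j : Fin M, (↑(g j) : Multiset X) := by
        rw [← Finset.erase_eq]
        exact Finset.add_sum_erase _ (fun j => (↑(g j) : Multiset X)) (Finset.mem_univ _)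
      have h1 : ((g hx.choose ++ [p a] : List X) : Multiset X) = ↑(g hx.choose) + {p a} := rfl
      calc ((g hx.choose ++ [p a] : List X) : Multiset X)
            + ∑ x ∈ Finset.univ \ {hx.choose}, (↑(g x) : Multiset X)
          = {p a} + ((↑(g hx.choose) : Multiset X)
              + ∑ x ∈ Finset.univ \ {hx.choose}, (↑(g x) : Multiset X)) := by
            rw [h1, add_comm (↑(g hx.choose) : Multiset X) ({p a} : Multiset X), add_assoc]
        _ = {p a} + ↑(T.map p) := by rw [h2, ihM]
        _ = ↑(List.map p (a :: T)) := by
            rw [Multiset.singleton_add, Multiset.cons_coe, List.map_cons]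

lemma count_lemma {X : Type*} (G : Set (X → ℝ)) (p : ℕ → X) (n d M : ℕ)
    (ε Λ : ℝ) (hε : 0 < ε) (hεn : 1/(n:ℝ) ≤ ε) (hΛ : 0 < Λ) (hM : Λ ≤ M * ε ^ 2)
    (hd : ∀ L : List X, isEluderSeq G (1/(n:ℝ)) L → L.length ≤ d)
    (S : Finset ℕ) (hS1 : ∀ k ∈ S, 1 ≤ k)
    (hw : ∀ k ∈ S, ∃ f₁ ∈ G, ∃ f₂ ∈ G,
      (∑ i ∈ Finset.Ico 1 k, (f₁ (p i) - f₂ (p i)) ^ 2) ≤ Λ ∧ ε < |f₁ (p k) - f₂ (p k)|) :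
    S.card ≤ M * d := by
  classical
  set T : List ℕ := (S.sort (· ≤ ·)).reverse with hTdef
  have hmemT : ∀ k, k ∈ T ↔ k ∈ S := by
    intro k; rw [hTdef, List.mem_reverse, Finset.mem_sort]
  have hTs : T.Pairwise (· > ·) := by
    rw [hTdef, List.pairwise_reverse]
    exact List.sortedLT_iff_pairwise.mp (Finset.sortedLT_sort S)
  have hlen : T.length = S.card := by
    rw [hTdef, List.length_reverse, Finset.length_sort]
  obtain ⟨hE, hMs⟩ := greedy_spec G ε Λ hε hΛ p M hM T hTs
    (fun k hk => hS1 k ((hmemT k).mp hk)) (fun k hk => hw k ((hmemT k).mp hk))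
  set g := greedy G ε M p T with hg
  have hcard : ∑ j : Fin M, (g j).length = T.length := by
    have h := congrArg Multiset.card hMs
    rw [Multiset.card_sum] at h
    simpa using h
  have hbound : ∀ j, (g j).length ≤ d := fun j => hd (g j) ⟨ε, hεn, hE j⟩
  calc S.card = T.length := hlen.symm
    _ = ∑ j : Fin M, (g j).length := hcard.symm
    _ ≤ ∑ _j : Fin M, d := Finset.sum_le_sum (fun j _ => hbound j)
    _ = M * d := by simp [Finset.sum_const, mul_comm]

lemma sum_one_div_sqrt (m : ℕ) :
    ∑ i ∈ Finset.range m, 1 / Real.sqrt ((i : ℝ) + 1) ≤ 2 * Real.sqrt m := by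
  induction m with
  | zero => simp
  | succ m ih =>
    rw [Finset.sum_range_succ]
    have ha : (0:ℝ) ≤ (m:ℝ) := Nat.cast_nonneg m
    have hb : Real.sqrt m ^ 2 = (m:ℝ) := Real.sq_sqrt ha
    have hc : Real.sqrt ((m:ℝ)+1) ^ 2 = (m:ℝ)+1 := Real.sq_sqrt (by positivity)
    have hpos : 0 < Real.sqrt ((m:ℝ)+1) := Real.sqrt_pos.2 (by positivity)
    have h0 : 0 ≤ Real.sqrt (m:ℝ) := Real.sqrt_nonneg _
    have key : 1 / Real.sqrt ((m:ℝ)+1) ≤ 2 * Real.sqrt ((m:ℝ)+1) - 2 * Real.sqrt (m:ℝ) := by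
      rw [div_le_iff₀ hpos]
      nlinarith [sq_nonneg (Real.sqrt ((m:ℝ)+1) - Real.sqrt (m:ℝ))]
    have hcast : ((m + 1 : ℕ) : ℝ) = (m:ℝ) + 1 := by push_cast; ring
    rw [hcast]
    linarith

set_option maxHeartbeats 1000000 in
lemma per_h {X : Type*} (G : Set (X → ℝ)) (p : ℕ → X) (n d : ℕ) (hn : 1 ≤ n)
    (β B : ℝ) (hβ : 0 < β) (hB : 0 ≤ B)
    (hd : ∀ L : List X, isEluderSeq G (1/(n:ℝ)) L → L.length ≤ d)
    (bb : ℕ → ℝ) (K' : Finset ℕ) (hK' : K' ⊆ Finset.Icc 1 n)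
    (hbB : ∀ k ∈ K', bb k ≤ B)
    (hwit : ∀ k ∈ K', ∀ ε : ℝ, 0 < ε → ε < bb k → ∃ f₁ ∈ G, ∃ f₂ ∈ G,
      (∑ i ∈ Finset.Ico 1 k, (f₁ (p i) - f₂ (p i)) ^ 2) ≤ 100 * β ∧
        ε < |f₁ (p k) - f₂ (p k)|) :
    ∑ k ∈ K', bb k ≤ 1 + B * d + 20 * Real.sqrt ((d:ℝ) * K'.card * β) := by
  classical
  set Λ : ℝ := 100 * β with hΛdef
  have hΛ : 0 < Λ := by positivity
  set K := K'.card with hKdef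
  have hn0 : (0:ℝ) < (n:ℝ) := by exact_mod_cast hn
  have hinv : (0:ℝ) < 1 / (n:ℝ) := by positivity
  have hKn : K ≤ n := by
    have := Finset.card_le_card hK'
    simpa [Nat.card_Icc] using this
  set l : List ℝ := (Multiset.sort (K'.val.map bb) (· ≤ ·)).reverse with hldef
  have hlcoe : (l : Multiset ℝ) = K'.val.map bb := by
    rw [hldef, Multiset.coe_reverse, Multiset.sort_eq]
  have hlen : l.length = K := by
    have := congrArg Multiset.card hlcoe
    simpa using this
  have hsum : ∑ k ∈ K', bb k = l.sum := by
    rw [Finset.sum]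
    rw [← hlcoe]
    rfl
  have hsorted : l.Pairwise (· ≥ ·) := by
    rw [hldef, List.pairwise_reverse]
    have := Multiset.pairwise_sort (K'.val.map bb) (· ≤ ·)
    exact this.imp (fun h => h)
  have hmono : ∀ (i j : Fin l.length), (i:ℕ) ≤ (j:ℕ) → l.get j ≤ l.get i := by
    intro i j hij
    rcases eq_or_lt_of_le hij with h | h
    · have : i = j := Fin.ext h
      rw [this]
    · exact List.pairwise_iff_get.mp hsorted i j h
  have hmem : ∀ x ∈ l, ∃ k ∈ K', x = bb k := by
    intro x hx
    have : x ∈ (l : Multiset ℝ) := hx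
    rw [hlcoe, Multiset.mem_map] at this
    obtain ⟨k, hk, hkx⟩ := this
    exact ⟨k, hk, hkx.symm⟩
  -- the rank / counting bound
  have hrank : ∀ (t : ℕ) (ht : t < l.length) (ε : ℝ), 1/(n:ℝ) ≤ ε →
      ε < l.get ⟨t, ht⟩ → (t + 1 : ℕ) ≤ ⌈Λ / ε^2⌉₊ * d := by
    intro t ht ε hεn hεlt
    have hε : 0 < ε := lt_of_lt_of_le hinv hεn
    set S := K'.filter (fun k => ε < bb k) with hSdef
    have hcount : t + 1 ≤ S.card := by
      have htake : ∀ x ∈ l.take (t+1), ε < x := by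
        intro x hx
        rw [List.mem_take_iff_getElem] at hx
        obtain ⟨i, hi, hix⟩ := hx
        have hi1 : i < l.length := Nat.lt_of_lt_of_le hi (min_le_right _ _)
        have hit : i ≤ t := Nat.lt_succ_iff.mp (Nat.lt_of_lt_of_le hi (min_le_left _ _))
        have := hmono ⟨i, hi1⟩ ⟨t, ht⟩ hit
        rw [← hix]
        exact lt_of_lt_of_le hεlt this
      have hsub : (↑(l.take (t+1)) : Multiset ℝ) ≤ (l : Multiset ℝ) :=
        (List.take_sublist _ _).subperm
      have hfil : Multiset.filter (fun x => ε < x) (↑(l.take (t+1)) : Multiset ℝ)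
          = (↑(l.take (t+1)) : Multiset ℝ) := by
        rw [Multiset.filter_eq_self]
        exact htake
      have hle : (↑(l.take (t+1)) : Multiset ℝ)
          ≤ Multiset.filter (fun x => ε < x) (l : Multiset ℝ) := by
        rw [← hfil]
        exact Multiset.filter_le_filter _ hsub
      have hcard := Multiset.card_le_card hle
      have hlen2 : (l.take (t+1)).length = t + 1 := by
        rw [List.length_take]
        exact min_eq_left (Nat.succ_le_of_lt ht)
      rw [hlcoe, Multiset.filter_map] at hcard
      have hSc : S.card = Multiset.card (Multiset.map bb
          (Multiset.filter ((fun x => ε < x) ∘ bb) K'.val)) := by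
        rw [Multiset.card_map]
        have : S.val = Multiset.filter ((fun x => ε < x) ∘ bb) K'.val := by
          rw [hSdef, Finset.filter_val]
          exact Multiset.filter_congr (fun x _ => Iff.rfl)
        rw [Finset.card_def, this]
      rw [hSc]
      have : Multiset.card (↑(l.take (t+1)) : Multiset ℝ) = t + 1 := by
        simpa using hlen2
      rw [← this]
      exact hcard
    have hCL : S.card ≤ ⌈Λ / ε^2⌉₊ * d := by
      apply count_lemma G p n d _ ε Λ hε hεn hΛ _ hd
      · intro k hk
        have hk' : k ∈ K' := Finset.mem_filter.mp hk |>.1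
        exact (Finset.mem_Icc.mp (hK' hk')).1
      · intro k hk
        obtain ⟨hk', hkb⟩ := Finset.mem_filter.mp hk
        exact hwit k hk' ε hε hkb
      · have h1 : Λ / ε^2 ≤ (⌈Λ / ε^2⌉₊ : ℝ) := Nat.le_ceil _
        have hε2 : (0:ℝ) < ε^2 := by positivity
        rw [div_le_iff₀ hε2] at h1
        exact h1
    exact le_trans hcount hCL
  -- pointwise bound on tail ranks
  have hptw : ∀ (t : ℕ) (ht : t < l.length), d ≤ t →
      l.get ⟨t, ht⟩ ≤ 1/(n:ℝ) + Real.sqrt (Λ * d / ((t:ℝ) + 1 - d)) := by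
    intro t ht htd
    by_contra h'
    push_neg at h'
    have hdd : (0:ℝ) < (t:ℝ) + 1 - (d:ℝ) := by
      have : (d:ℝ) ≤ (t:ℝ) := by exact_mod_cast htd
      linarith
    set s := Real.sqrt (Λ * d / ((t:ℝ) + 1 - d)) with hsdef
    have hs0 : 0 ≤ s := Real.sqrt_nonneg _
    rcases Nat.eq_zero_or_pos d with hd0 | hd1
    · have := hrank t ht (1/(n:ℝ)) le_rfl (by linarith)
      rw [hd0] at this
      simpa using this
    · have hd1' : (1:ℝ) ≤ (d:ℝ) := by exact_mod_cast hd1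
      have hspos : 0 < s := by
        rw [hsdef]
        apply Real.sqrt_pos.mpr
        positivity
      set ε := 1/(n:ℝ) + s with hεdef
      have hεn : 1/(n:ℝ) ≤ ε := by rw [hεdef]; linarith
      have hεs : s < ε := by rw [hεdef]; linarith
      have hε : 0 < ε := lt_of_le_of_lt hs0 hεs
      have hε2 : (0:ℝ) < ε^2 := by positivity
      have h1 := hrank t ht ε hεn h'
      have h2 : ((t:ℝ) + 1) ≤ (Λ / ε^2 + 1) * d := by
        have hcast : ((t + 1 : ℕ):ℝ) ≤ ((⌈Λ / ε^2⌉₊ * d : ℕ):ℝ) := by exact_mod_cast h1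
        push_cast at hcast
        have hceil : (⌈Λ / ε^2⌉₊ : ℝ) < Λ / ε^2 + 1 := Nat.ceil_lt_add_one (by positivity)
        nlinarith [(Nat.cast_nonneg d : (0:ℝ) ≤ d)]
      have e1 : ((t:ℝ) + 1) * ε^2 ≤ (Λ + ε^2) * (d:ℝ) := by
        have h4 : (Λ / ε^2 + 1) * (d:ℝ) = (Λ + ε^2) * (d:ℝ) / ε^2 := by
          field_simp
        rw [h4] at h2
        exact (le_div_iff₀ hε2).mp h2
      have hs2 : s^2 = Λ * d / ((t:ℝ) + 1 - d) := Real.sq_sqrt (by positivity)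
      have e2 : s^2 * ((t:ℝ) + 1 - (d:ℝ)) = Λ * (d:ℝ) := by
        rw [hs2]
        exact div_mul_cancel₀ _ (ne_of_gt hdd)
      have e3 : s^2 < ε^2 := by nlinarith
      nlinarith [mul_pos (sub_pos.mpr e3) hdd]
  -- sum it up
  have hupB : ∀ (t : ℕ) (ht : t < l.length), l.get ⟨t, ht⟩ ≤ B := by
    intro t ht
    obtain ⟨k, hk, hkx⟩ := hmem _ (l.get_mem ⟨t, ht⟩)
    rw [hkx]
    exact hbB k hk
  set gg : ℕ → ℝ := fun t => if h : t < l.length then l.get ⟨t, h⟩ else 0 with hggdef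
  have hlsum : l.sum = ∑ t ∈ Finset.range K, gg t := by
    have h1 : l.sum = ∑ i : Fin l.length, l.get i := by
      simpa using (List.sum_ofFn (fun i : Fin l.length => l.get i)).symm
    have h2 : ∀ i : Fin l.length, l.get i = gg i := by
      intro i
      rw [hggdef]
      simp [i.2]
    rw [h1, Finset.sum_congr rfl (fun i _ => h2 i),
      Fin.sum_univ_eq_sum_range (fun t => gg t) l.length, hlen]
  rcases le_or_gt K d with hKd | hdK
  · -- few episodes: trivial bound
    have : l.sum ≤ K * B := by
      rw [hlsum]
      calc ∑ t ∈ Finset.range K, gg t ≤ ∑ t ∈ Finset.range K, B := by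
            apply Finset.sum_le_sum
            intro t htk
            rw [hggdef]
            have ht : t < l.length := by rw [hlen]; exact Finset.mem_range.mp htk
            simp only [dif_pos ht]
            exact hupB t ht
        _ = K * B := by simp [mul_comm]
    have hKdR : (K:ℝ) ≤ (d:ℝ) := by exact_mod_cast hKd
    have hsq : 0 ≤ Real.sqrt ((d:ℝ) * K * β) := Real.sqrt_nonneg _
    rw [hsum]
    nlinarith
  · -- main case
    have hsplit : ∑ t ∈ Finset.range K, gg t
        = ∑ t ∈ Finset.range d, gg t + ∑ t ∈ Finset.Ico d K, gg t := by
      simp only [Finset.range_eq_Ico]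
      exact (Finset.sum_Ico_consecutive gg (Nat.zero_le d) hdK.le).symm
    have hhead : ∑ t ∈ Finset.range d, gg t ≤ (d:ℝ) * B := by
      calc ∑ t ∈ Finset.range d, gg t ≤ ∑ t ∈ Finset.range d, B := by
            apply Finset.sum_le_sum
            intro t htd
            have ht : t < l.length := by
              rw [hlen]
              exact lt_of_lt_of_le (Finset.mem_range.mp htd) (le_of_lt hdK)
            rw [hggdef]
            simp only [dif_pos ht]
            exact hupB t ht
        _ = (d:ℝ) * B := by simp [mul_comm]
    have htail : ∑ t ∈ Finset.Ico d K, gg t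
        ≤ ∑ t ∈ Finset.Ico d K, (1/(n:ℝ) + Real.sqrt (Λ * d) / Real.sqrt ((t:ℝ) + 1 - d)) := by
      apply Finset.sum_le_sum
      intro t htm
      obtain ⟨htd, htK⟩ := Finset.mem_Ico.mp htm
      have ht : t < l.length := by rw [hlen]; exact htK
      rw [hggdef]
      simp only [dif_pos ht]
      have := hptw t ht htd
      rwa [Real.sqrt_div (by positivity : (0:ℝ) ≤ Λ * d) ((t:ℝ) + 1 - d)] at this
    have hreindex : ∑ t ∈ Finset.Ico d K, (1/(n:ℝ)
          + Real.sqrt (Λ * d) / Real.sqrt ((t:ℝ) + 1 - d))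
        = ∑ i ∈ Finset.range (K - d), (1/(n:ℝ)
          + Real.sqrt (Λ * d) * (1 / Real.sqrt ((i:ℝ) + 1))) := by
      rw [Finset.sum_Ico_eq_sum_range]
      apply Finset.sum_congr rfl
      intro i _
      have hc : ((d + i : ℕ):ℝ) + 1 - (d:ℝ) = (i:ℝ) + 1 := by push_cast; ring
      rw [hc]
      ring
    have htail3 : ∑ i ∈ Finset.range (K - d), (1/(n:ℝ)
          + Real.sqrt (Λ * d) * (1 / Real.sqrt ((i:ℝ) + 1)))
        ≤ 1 + Real.sqrt (Λ * d) * (2 * Real.sqrt K) := by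
      rw [Finset.sum_add_distrib, ← Finset.mul_sum]
      have hpart1 : ∑ _i ∈ Finset.range (K - d), (1/(n:ℝ)) ≤ 1 := by
        rw [Finset.sum_const, Finset.card_range, nsmul_eq_mul]
        have h1 : ((K - d : ℕ):ℝ) ≤ (n:ℝ) := by
          exact_mod_cast le_trans (Nat.sub_le K d) hKn
        rw [mul_one_div, div_le_one hn0]
        exact h1
      have hpart2 : Real.sqrt (Λ * d) * (∑ i ∈ Finset.range (K - d), 1 / Real.sqrt ((i:ℝ) + 1))
          ≤ Real.sqrt (Λ * d) * (2 * Real.sqrt K) := by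
        apply mul_le_mul_of_nonneg_left _ (Real.sqrt_nonneg _)
        calc ∑ i ∈ Finset.range (K - d), 1 / Real.sqrt ((i:ℝ) + 1)
            ≤ 2 * Real.sqrt ((K - d : ℕ):ℝ) := sum_one_div_sqrt (K - d)
          _ ≤ 2 * Real.sqrt K := by
              have : ((K - d : ℕ):ℝ) ≤ (K:ℝ) := by exact_mod_cast Nat.sub_le K d
              have := Real.sqrt_le_sqrt this
              linarith
      linarith
    have hmagic : Real.sqrt (Λ * d) * (2 * Real.sqrt K) = 20 * Real.sqrt ((d:ℝ) * K * β) := by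
      have h1 : Real.sqrt (Λ * d) * Real.sqrt K = Real.sqrt (Λ * (d:ℝ) * (K:ℝ)) := by
        rw [← Real.sqrt_mul (by positivity) ((K:ℝ))]
      have h2 : Λ * (d:ℝ) * (K:ℝ) = 100 * ((d:ℝ) * K * β) := by rw [hΛdef]; ring
      have h3 : Real.sqrt (100 * ((d:ℝ) * K * β)) = 10 * Real.sqrt ((d:ℝ) * K * β) := by
        rw [Real.sqrt_mul (by norm_num : (0:ℝ) ≤ 100)]
        rw [show (100:ℝ) = 10^2 by norm_num, Real.sqrt_sq (by norm_num : (0:ℝ) ≤ 10)]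
      calc Real.sqrt (Λ * d) * (2 * Real.sqrt K) = 2 * (Real.sqrt (Λ * d) * Real.sqrt K) := by ring
        _ = 2 * Real.sqrt (100 * ((d:ℝ) * K * β)) := by rw [h1, h2]
        _ = 20 * Real.sqrt ((d:ℝ) * K * β) := by rw [h3]; ring
    calc ∑ k ∈ K', bb k = l.sum := hsum
      _ = ∑ t ∈ Finset.range K, gg t := hlsum
      _ = ∑ t ∈ Finset.range d, gg t + ∑ t ∈ Finset.Ico d K, gg t := hsplit
      _ ≤ (d:ℝ) * B + (1 + Real.sqrt (Λ * d) * (2 * Real.sqrt K)) := by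
          have := le_trans htail (le_of_eq hreindex) |>.trans htail3
          linarith
      _ ≤ 1 + B * d + 20 * Real.sqrt ((d:ℝ) * K * β) := by
          rw [hmagic] at *
          linarith


/-- **Bound on the sum of bonus functions over any set of episodes (deterministic
form).** There is an absolute constant `C > 0` such that for any type `X`, horizon
`H ≥ 1`, number of episodes `n ≥ 1`, `β > 0`, nonempty classes `F h` of functions
`X → [0, H+1]` and data sequences `z h 1, …, z h n`, with widths
`b h k = sup {|f₁(z_h^k) − f₂(z_h^k)| : f₁, f₂ ∈ F h, ∑_{i<k} (f₁(z_h^i) − f₂(z_h^i))² ≤ 100 β}`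
and `d` the (assumed finite) maximum over `h ∈ {1,…,H}` of `dim_E(F h, 1/n)`,
every subset `K' ⊆ {1,…,n}` satisfies
`∑_{k ∈ K'} ∑_{h=1}^H b h k ≤ H + H (H+1) d + C H √(d |K'| β)`. -/
theorem stmt_7 : ∃ C : ℝ, 0 < C ∧
    ∀ (X : Type u) (H n : ℕ), 1 ≤ H → 1 ≤ n → ∀ β : ℝ, 0 < β →
    ∀ F : ℕ → Set (X → ℝ),
    (∀ h ∈ Finset.Icc 1 H, (F h).Nonempty) →
    (∀ h ∈ Finset.Icc 1 H, ∀ f ∈ F h, ∀ x, f x ∈ Set.Icc (0 : ℝ) (H + 1)) →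
    ∀ z : ℕ → ℕ → X, ∀ d : ℕ,
    ((d : ℕ∞) = (Finset.Icc 1 H).sup fun h => eluderDim (F h) (1 / (n : ℝ))) →
    ∀ b : ℕ → ℕ → ℝ,
    (∀ h ∈ Finset.Icc 1 H, ∀ k ∈ Finset.Icc 1 n,
      b h k = sSup {y : ℝ | ∃ f₁ ∈ F h, ∃ f₂ ∈ F h,
        (∑ i ∈ Finset.Ico 1 k, (f₁ (z h i) - f₂ (z h i)) ^ 2) ≤ 100 * β ∧
        y = |f₁ (z h k) - f₂ (z h k)|}) →
    ∀ K' ⊆ Finset.Icc 1 n,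
      ∑ k ∈ K', ∑ h ∈ Finset.Icc 1 H, b h k ≤
        (H : ℝ) + (H : ℝ) * ((H : ℝ) + 1) * (d : ℝ) +
          C * (H : ℝ) * Real.sqrt ((d : ℝ) * (K'.card : ℝ) * β) := by
  refine ⟨20, by norm_num, ?_⟩
  intro X H n hH hn β hβ F hFne hFbd z d hdim b hb K' hK'
  have key : ∀ h ∈ Finset.Icc 1 H, ∑ k ∈ K', b h k
      ≤ 1 + ((H:ℝ) + 1) * d + 20 * Real.sqrt ((d:ℝ) * K'.card * β) := by
    intro h hh
    have hzero : ∀ k, (0:ℝ) ∈ {y : ℝ | ∃ f₁ ∈ F h, ∃ f₂ ∈ F h,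
        (∑ i ∈ Finset.Ico 1 k, (f₁ (z h i) - f₂ (z h i)) ^ 2) ≤ 100 * β ∧
        y = |f₁ (z h k) - f₂ (z h k)|} := by
      intro k
      obtain ⟨f, hf⟩ := hFne h hh
      exact ⟨f, hf, f, hf, by simp; positivity, by simp⟩
    apply per_h (F h) (z h) n d hn β ((H:ℝ) + 1) hβ (by positivity)
    · -- eluder dimension bound
      intro L hL
      have h1 : (L.length : ℕ∞) ≤ eluderDim (F h) (1/(n:ℝ)) :=
        le_iSup₂ (f := fun (L : List X) (_ : L ∈ {L : List X | isEluderSeq (F h) (1/(n:ℝ)) L})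
          => (L.length : ℕ∞)) L hL
      have h2 : eluderDim (F h) (1/(n:ℝ)) ≤ ((d:ℕ) : ℕ∞) := hdim ▸ Finset.le_sup (f := fun h => eluderDim (F h) (1/(n:ℝ))) hh
      exact_mod_cast h1.trans h2
    · exact hK'
    · -- upper bound on widths
      intro k hk
      rw [hb h hh k (hK' hk)]
      apply csSup_le ⟨0, hzero k⟩
      rintro y ⟨f₁, hf₁, f₂, hf₂, -, rfl⟩
      have e1 := hFbd h hh f₁ hf₁ (z h k)
      have e2 := hFbd h hh f₂ hf₂ (z h k)
      rw [Set.mem_Icc] at e1 e2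
      rw [abs_sub_le_iff]
      constructor <;> linarith [e1.1, e1.2, e2.1, e2.2]
    · -- witnesses
      intro k hk ε hε hlt
      rw [hb h hh k (hK' hk)] at hlt
      obtain ⟨y, hy, hεy⟩ := exists_lt_of_lt_csSup ⟨0, hzero k⟩ hlt
      obtain ⟨f₁, hf₁, f₂, hf₂, hsum, rfl⟩ := hy
      exact ⟨f₁, hf₁, f₂, hf₂, hsum, hεy⟩
  have hcard : (Finset.Icc 1 H).card = H := by rw [Nat.card_Icc]; omega
  calc ∑ k ∈ K', ∑ h ∈ Finset.Icc 1 H, b h k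
      = ∑ h ∈ Finset.Icc 1 H, ∑ k ∈ K', b h k := Finset.sum_comm
    _ ≤ ∑ _h ∈ Finset.Icc 1 H,
        (1 + ((H:ℝ) + 1) * d + 20 * Real.sqrt ((d:ℝ) * K'.card * β)) :=
        Finset.sum_le_sum key
    _ = (H:ℝ) * (1 + ((H:ℝ) + 1) * d + 20 * Real.sqrt ((d:ℝ) * K'.card * β)) := by
        rw [Finset.sum_const, hcard, nsmul_eq_mul]
    _ = (H : ℝ) + (H : ℝ) * ((H : ℝ) + 1) * (d : ℝ) +
          20 * (H : ℝ) * Real.sqrt ((d : ℝ) * (K'.card : ℝ) * β) := by ring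
end

section
/- Optimism of the model-based value iterate: consider a finite-horizon episodic MDP, and in addition let P̂_h : S × A → (S → ℝ) be arbitrary signed transition estimates and b_h : S × A → [0,∞) bonus functions, for h = 1,…,H. Define by backward recursion V_{H+1} ≡ 0, Q_h(s,a) = min{ r_h(s,a) + ∑_{s'∈S} P̂_h(s'|s,a) V_{h+1}(s') + b_h(s,a), H }, and V_h(s) = max_{a∈A} Q_h(s,a). If for all h, s, a it holds that |∑_{s'∈S} (P̂_h(s'|s,a) − P_h(s'|s,a)) V_{h+1}(s')| ≤ b_h(s,a), then for all h, s, a one has Q_h(s,a) ≥ Q*_h(s,a), and consequently V_h(s) ≥ V*_h(s) for all h, s. -/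
/-- **Optimism of the model-based value iterate.** In a finite-horizon episodic MDP
(steps `1, …, H` indexed by `0, …, H-1`, with `V_{H+1}` at index `H`), given signed
transition estimates `Phat`, nonnegative bonuses `bon`, and the iterates
`Q h s a = min (r h s a + ∑_{s'} Phat h s a s' · V (h+1) s' + bon h s a) H`,
`V h s = max_a Q h s a`: if
`|∑_{s'} (Phat h s a s' − P h s a s') · V (h+1) s'| ≤ bon h s a` for all `h, s, a`,
then `Q h s a ≥ Q* h s a` for all `h, s, a`, and `V h s ≥ V* h s` for all `h, s`. -/
theorem stmt_8 {S A : Type*} [Fintype S] [Fintype A] [Nonempty A]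
    (H : ℕ) (P : ℕ → S → A → S → ℝ)
    (hP0 : ∀ h s a s', 0 ≤ P h s a s')
    (hP1 : ∀ h s a, ∑ s', P h s a s' = 1)
    (r : ℕ → S → A → ℝ) (hr : ∀ h s a, r h s a ∈ Set.Icc (0 : ℝ) 1)
    (Phat : ℕ → S → A → S → ℝ)
    (bon : ℕ → S → A → ℝ) (hbon : ∀ h s a, 0 ≤ bon h s a)
    (Q : ℕ → S → A → ℝ) (V : ℕ → S → ℝ)
    (Qst : ℕ → S → A → ℝ) (Vst : ℕ → S → ℝ)
    (hVH : ∀ s, V H s = 0)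
    (hQ : ∀ h < H, ∀ s a,
      Q h s a = min (r h s a + ∑ s', Phat h s a s' * V (h + 1) s' + bon h s a) (H : ℝ))
    (hV : ∀ h < H, ∀ s,
      V h s = Finset.univ.sup' Finset.univ_nonempty (fun a => Q h s a))
    (hVstH : ∀ s, Vst H s = 0)
    (hQst : ∀ h < H, ∀ s a, Qst h s a = r h s a + ∑ s', P h s a s' * Vst (h + 1) s')
    (hVst : ∀ h < H, ∀ s,
      Vst h s = Finset.univ.sup' Finset.univ_nonempty (fun a => Qst h s a))
    (hopt : ∀ h < H, ∀ s a,
      |∑ s', (Phat h s a s' - P h s a s') * V (h + 1) s'| ≤ bon h s a) :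
    (∀ h < H, ∀ s a, Qst h s a ≤ Q h s a) ∧ (∀ h ≤ H, ∀ s, Vst h s ≤ V h s) := by
  -- upper bound: Vst h s ≤ H - h (as d with h + d = H)
  have ub : ∀ d h, h + d = H → ∀ s, Vst h s ≤ (d : ℝ) := by
    intro d
    induction d with
    | zero =>
      intro h hh s
      simp only [Nat.add_zero] at hh
      subst hh
      simp [hVstH]
    | succ n ih =>
      intro h hh s
      have hhH : h < H := by omega
      rw [hVst h hhH]
      apply Finset.sup'_le
      intro a _
      rw [hQst h hhH]
      have hsum : ∑ s', P h s a s' * Vst (h + 1) s' ≤ (n : ℝ) := by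
        calc ∑ s', P h s a s' * Vst (h + 1) s'
            ≤ ∑ s', P h s a s' * (n : ℝ) :=
              Finset.sum_le_sum fun s' _ =>
                mul_le_mul_of_nonneg_left (ih (h + 1) (by omega) s') (hP0 h s a s')
          _ = (n : ℝ) := by rw [← Finset.sum_mul, hP1, one_mul]
      have hr1 := (hr h s a).2
      have : (n : ℝ) + 1 ≤ (H : ℝ) := by exact_mod_cast by omega
      push_cast
      linarith
  -- main monotonicity: Vst h ≤ V h
  have key : ∀ d h, h + d = H → ∀ s, Vst h s ≤ V h s := by
    intro d
    induction d with
    | zero =>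
      intro h hh s
      simp only [Nat.add_zero] at hh
      subst hh
      simp [hVstH, hVH]
    | succ n ih =>
      intro h hh s
      have hhH : h < H := by omega
      rw [hVst h hhH, hV h hhH]
      apply Finset.sup'_le
      intro a _
      refine le_trans ?_ (Finset.le_sup' (fun a => Q h s a) (Finset.mem_univ a))
      rw [hQst h hhH, hQ h hhH]
      have hQstH : r h s a + ∑ s', P h s a s' * Vst (h + 1) s' ≤ (H : ℝ) := by
        have hsum : ∑ s', P h s a s' * Vst (h + 1) s' ≤ (n : ℝ) := by
          calc ∑ s', P h s a s' * Vst (h + 1) s'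
              ≤ ∑ s', P h s a s' * (n : ℝ) :=
                Finset.sum_le_sum fun s' _ =>
                  mul_le_mul_of_nonneg_left (ub n (h + 1) (by omega) s') (hP0 h s a s')
            _ = (n : ℝ) := by rw [← Finset.sum_mul, hP1, one_mul]
        have : (n : ℝ) + 1 ≤ (H : ℝ) := by exact_mod_cast by omega
        linarith [(hr h s a).2]
      refine le_min ?_ hQstH
      have h1 : ∑ s', P h s a s' * Vst (h + 1) s' ≤ ∑ s', P h s a s' * V (h + 1) s' :=
        Finset.sum_le_sum fun s' _ =>
          mul_le_mul_of_nonneg_left (ih (h + 1) (by omega) s') (hP0 h s a s')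
      have h2 := (abs_le.mp (hopt h hhH s a)).1
      have h3 : ∑ s', (Phat h s a s' - P h s a s') * V (h + 1) s'
          = ∑ s', Phat h s a s' * V (h + 1) s' - ∑ s', P h s a s' * V (h + 1) s' := by
        rw [← Finset.sum_sub_distrib]
        exact Finset.sum_congr rfl fun s' _ => by ring
      rw [h3] at h2
      linarith
  refine ⟨?_, ?_⟩
  · intro h hhH s a
    rw [hQst h hhH, hQ h hhH]
    set n := H - (h + 1) with hn
    have hQstH : r h s a + ∑ s', P h s a s' * Vst (h + 1) s' ≤ (H : ℝ) := by
      have hsum : ∑ s', P h s a s' * Vst (h + 1) s' ≤ (n : ℝ) := by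
        calc ∑ s', P h s a s' * Vst (h + 1) s'
            ≤ ∑ s', P h s a s' * (n : ℝ) :=
              Finset.sum_le_sum fun s' _ =>
                mul_le_mul_of_nonneg_left (ub n (h + 1) (by omega) s') (hP0 h s a s')
          _ = (n : ℝ) := by rw [← Finset.sum_mul, hP1, one_mul]
      have : (n : ℝ) + 1 ≤ (H : ℝ) := by exact_mod_cast by omega
      linarith [(hr h s a).2]
    refine le_min ?_ hQstH
    have h1 : ∑ s', P h s a s' * Vst (h + 1) s' ≤ ∑ s', P h s a s' * V (h + 1) s' :=
      Finset.sum_le_sum fun s' _ =>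
        mul_le_mul_of_nonneg_left (key (H - (h + 1)) (h + 1) (by omega) s') (hP0 h s a s')
    have h2 := (abs_le.mp (hopt h hhH s a)).1
    have h3 : ∑ s', (Phat h s a s' - P h s a s') * V (h + 1) s'
        = ∑ s', Phat h s a s' * V (h + 1) s' - ∑ s', P h s a s' * V (h + 1) s' := by
      rw [← Finset.sum_sub_distrib]
      exact Finset.sum_congr rfl fun s' _ => by ring
    rw [h3] at h2
    linarith
  · intro h hh s
    exact key (H - h) h (by omega) s
end

section
/- One-step suboptimality recursion: consider a finite-horizon episodic MDP, signed transition estimates P̂_h : S × A → (S → ℝ), and bonus functions b_h : S × A → [0,∞). Define V_{H+1} ≡ 0, Q_h(s,a) = min{ r_h(s,a) + ∑_{s'∈S} P̂_h(s'|s,a) V_{h+1}(s') + b_h(s,a), H }, V_h(s) = max_{a∈A} Q_h(s,a), and assume |∑_{s'∈S} (P̂_h(s'|s,a) − P_h(s'|s,a)) V_{h+1}(s')| ≤ b_h(s,a) for all h, s, a. Then for every deterministic policy π and all h, s, a: Q_h(s,a) − Q^π_h(s,a) ≤ ∑_{s'∈S} P_h(s'|s,a) (V_{h+1}(s') − V^π_{h+1}(s'))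 + 2 b_h(s,a). -/
/-- **One-step suboptimality recursion.** In a finite-horizon episodic MDP (steps
`1, …, H` indexed by `0, …, H-1`), with optimistic iterates
`Q h s a = min (r h s a + ∑_{s'} Phat h s a s' · V (h+1) s' + bon h s a) H`,
`V h s = max_a Q h s a`, and the assumption
`|∑_{s'} (Phat h s a s' − P h s a s') · V (h+1) s'| ≤ bon h s a`, for every
deterministic policy `π` and all `h, s, a`:
`Q h s a − Q^π h s a ≤ ∑_{s'} P h s a s' · (V (h+1) s' − V^π (h+1) s') + 2 bon h s a`. -/
theorem stmt_9 {S A : Type*} [Fintype S] [Fintype A] [Nonempty A]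
    (H : ℕ) (P : ℕ → S → A → S → ℝ)
    (hP0 : ∀ h s a s', 0 ≤ P h s a s')
    (hP1 : ∀ h s a, ∑ s', P h s a s' = 1)
    (r : ℕ → S → A → ℝ) (hr : ∀ h s a, r h s a ∈ Set.Icc (0 : ℝ) 1)
    (Phat : ℕ → S → A → S → ℝ)
    (bon : ℕ → S → A → ℝ) (hbon : ∀ h s a, 0 ≤ bon h s a)
    (Q : ℕ → S → A → ℝ) (V : ℕ → S → ℝ)
    (hVH : ∀ s, V H s = 0)
    (hQ : ∀ h < H, ∀ s a,
      Q h s a = min (r h s a + ∑ s', Phat h s a s' * V (h + 1) s' + bon h s a) (H : ℝ))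
    (hV : ∀ h < H, ∀ s,
      V h s = Finset.univ.sup' Finset.univ_nonempty (fun a => Q h s a))
    (hopt : ∀ h < H, ∀ s a,
      |∑ s', (Phat h s a s' - P h s a s') * V (h + 1) s'| ≤ bon h s a)
    (π : ℕ → S → A) (Vπ : ℕ → S → ℝ) (Qπ : ℕ → S → A → ℝ)
    (hVπH : ∀ s, Vπ H s = 0)
    (hQπ : ∀ h < H, ∀ s a, Qπ h s a = r h s a + ∑ s', P h s a s' * Vπ (h + 1) s')
    (hVπ : ∀ h < H, ∀ s, Vπ h s = Qπ h s (π h s)) :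
    ∀ h < H, ∀ s a,
      Q h s a - Qπ h s a ≤
        (∑ s', P h s a s' * (V (h + 1) s' - Vπ (h + 1) s')) + 2 * bon h s a := by
  intro h hh s a
  have hopt' := hopt h hh s a
  have h1 : Q h s a ≤ r h s a + ∑ s', Phat h s a s' * V (h + 1) s' + bon h s a := by
    rw [hQ h hh s a]; exact min_le_left _ _
  have h2 : ∑ s', Phat h s a s' * V (h + 1) s'
      ≤ ∑ s', P h s a s' * V (h + 1) s' + bon h s a := by
    have := (abs_le.mp hopt').2
    have heq : ∑ s', (Phat h s a s' - P h s a s') * V (h + 1) s'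
        = (∑ s', Phat h s a s' * V (h + 1) s') - ∑ s', P h s a s' * V (h + 1) s' := by
      rw [← Finset.sum_sub_distrib]; congr 1; ext s'; ring
    linarith [heq ▸ this]
  rw [hQπ h hh s a]
  have hsum : ∑ s', P h s a s' * (V (h + 1) s' - Vπ (h + 1) s')
      = (∑ s', P h s a s' * V (h + 1) s') - ∑ s', P h s a s' * Vπ (h + 1) s' := by
    rw [← Finset.sum_sub_distrib]; congr 1; ext s'; ring
  rw [hsum]
  linarith [hbon h s a]
end

section
/- Telescoping bound along a trajectory: consider a finite-horizon episodic MDP, signed transition estimates P̂_h : S × A → (S → ℝ), and bonus functions b_h : S × A → [0,∞). Define V_{H+1} ≡ 0, Q_h(s,a) = min{ r_h(s,a) + ∑_{s'∈S} P̂_h(s'|s,a) V_{h+1}(s') + b_h(s,a), H }, V_h(s) = max_{a∈A} Q_h(s,a), and assume |∑_{s'∈S} (P̂_h(s'|s,a) − P_h(s'|s,a)) V_{h+1}(s')| ≤ b_h(s,a) for all h, s, a. Let π be a greedy policy with respect to Q, i.e. Q_h(s, π_h(s)) = max_{a} Q_h(s,a) for all h, s. Then for every sequence of states s_1, s_2,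 …, s_{H+1} ∈ S with actions a_h = π_h(s_h), and every h ∈ {1,…,H}: Q_h(s_h, a_h) − Q^π_h(s_h, a_h) ≤ ∑_{h'=h}^H ε_{h'} + 2 ∑_{h'=h}^H b_{h'}(s_{h'}, a_{h'}), where ε_{h'} = ∑_{s'∈S} P_{h'}(s'|s_{h'}, a_{h'}) (V_{h'+1}(s') − V^π_{h'+1}(s')) − (V_{h'+1}(s_{h'+1}) − V^π_{h'+1}(s_{h'+1})). -/
/-!
The greedy choice makes the optimistic value `V h (st h)` equal to the optimistic `Q`-value of
the action the policy plays, so along the trajectory the `Q`-gap at step `h` is the `V`-gap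
`g h := V h (st h) - Vπ h (st h)`. One Bellman step shows
`g h ≤ E[V-gap at h+1] + 2 bon`: the bonus once pays for the optimism in `Q`, once for replacing
`Phat` by `P`, since it dominates the estimation error. Writing the expected next gap as the
realized gap `g (h+1)` plus the martingale-difference term `ε_h`, the bound telescopes down to
`g H = 0`.
-/

open Finset

theorem sub_le_sum_Ico_of_le_add_succ {M : Type*} [AddCommGroup M] [PartialOrder M]
    [IsOrderedAddMonoid M] {g c : ℕ → M} {m n : ℕ} (hmn : m ≤ n)
    (hstep : ∀ k ∈ Ico m n, g k ≤ c k + g (k + 1)) :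
    g m - g n ≤ ∑ k ∈ Ico m n, c k := by
  calc g m - g n = ∑ k ∈ Ico m n, (g k - g (k + 1)) := by
        rw [← neg_sub, ← sum_Ico_sub (fun k => g k) hmn, ← sum_neg_distrib]
        simp only [neg_sub]
    _ ≤ ∑ k ∈ Ico m n, c k :=
        sum_le_sum fun k hk => sub_le_iff_le_add.mpr (hstep k hk)

theorem optimistic_backup_sub_le {S : Type*} [Fintype S] {r q qπ b : ℝ}
    {P Phat v vπ : S → ℝ} (hq : q ≤ r + ∑ s, Phat s * v s + b)
    (hb : |∑ s, (Phat s - P s) * v s| ≤ b) (hqπ : qπ = r + ∑ s, P s * vπ s) :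
    q - qπ ≤ ∑ s, P s * (v s - vπ s) + 2 * b := by
  have hest : ∑ s, Phat s * v s ≤ ∑ s, P s * v s + b := by
    have := (abs_le.mp hb).2
    simp only [sub_mul, sum_sub_distrib] at this
    linarith
  have hsplit : ∑ s, P s * (v s - vπ s) = ∑ s, P s * v s - ∑ s, P s * vπ s := by
    simp only [mul_sub, sum_sub_distrib]
  rw [hqπ, hsplit]
  linarith

theorem stmt_10_general {S A : Type*} [Fintype S] [Fintype A] [Nonempty A]
    (H : ℕ) (P : ℕ → S → A → S → ℝ)
    (r : ℕ → S → A → ℝ)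
    (Phat : ℕ → S → A → S → ℝ)
    (bon : ℕ → S → A → ℝ)
    (Q : ℕ → S → A → ℝ) (V : ℕ → S → ℝ)
    (hVH : ∀ s, V H s = 0)
    (hQ : ∀ h < H, ∀ s a,
      Q h s a = min (r h s a + ∑ s', Phat h s a s' * V (h + 1) s' + bon h s a) (H : ℝ))
    (hV : ∀ h < H, ∀ s,
      V h s = Finset.univ.sup' Finset.univ_nonempty (fun a => Q h s a))
    (hopt : ∀ h < H, ∀ s a,
      |∑ s', (Phat h s a s' - P h s a s') * V (h + 1) s'| ≤ bon h s a)
    (π : ℕ → S → A) (Vπ : ℕ → S → ℝ) (Qπ : ℕ → S → A → ℝ)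
    (hVπH : ∀ s, Vπ H s = 0)
    (hQπ : ∀ h < H, ∀ s a, Qπ h s a = r h s a + ∑ s', P h s a s' * Vπ (h + 1) s')
    (hVπ : ∀ h < H, ∀ s, Vπ h s = Qπ h s (π h s))
    (hgreedy : ∀ h < H, ∀ s,
      Q h s (π h s) = Finset.univ.sup' Finset.univ_nonempty (fun a => Q h s a))
    (st : ℕ → S) :
    ∀ h < H,
      Q h (st h) (π h (st h)) - Qπ h (st h) (π h (st h)) ≤
        (∑ h' ∈ Finset.Ico h H,
          ((∑ s', P h' (st h') (π h' (st h')) s' * (V (h' + 1) s' - Vπ (h' + 1) s')) -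
            (V (h' + 1) (st (h' + 1)) - Vπ (h' + 1) (st (h' + 1))))) +
        2 * ∑ h' ∈ Finset.Ico h H, bon h' (st h') (π h' (st h')) := by
  set g : ℕ → ℝ := fun h => V h (st h) - Vπ h (st h)
  have hgap : ∀ h < H, Q h (st h) (π h (st h)) - Qπ h (st h) (π h (st h)) = g h := by
    intro h hh
    simp only [g, hV h hh, hVπ h hh, hgreedy h hh]
  have hstep : ∀ h < H, g h ≤
      ((∑ s', P h (st h) (π h (st h)) s' * (V (h + 1) s' - Vπ (h + 1) s')) - g (h + 1)
        + 2 * bon h (st h) (π h (st h))) + g (h + 1) := by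
    intro h hh
    rw [← hgap h hh]
    have := optimistic_backup_sub_le ((hQ h hh (st h) (π h (st h))).trans_le (min_le_left _ _))
      (hopt h hh _ _) (hQπ h hh _ _)
    linarith
  intro h hh
  have := sub_le_sum_Ico_of_le_add_succ hh.le
    fun k hk => hstep k (mem_Ico.mp hk).2
  rw [show g H = 0 by simp [g, hVH, hVπH], sub_zero, ← hgap h hh] at this
  rwa [sum_add_distrib, ← mul_sum] at this

/-- **Telescoping bound along a trajectory.** In a finite-horizon episodic MDP (steps
`1, …, H` indexed by `0, …, H-1`), with optimistic iterates `Q`, `V` as in the one-step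
recursion, a policy `π` greedy with respect to `Q`, and any state sequence
`st 0, st 1, …, st H` with actions `a h = π h (st h)`, for every `h < H`:
`Q h (st h) (a h) − Q^π h (st h) (a h) ≤ ∑_{h'=h}^{H-1} ε_{h'} + 2 ∑_{h'=h}^{H-1} bon h' (st h') (a h')`,
where `ε_{h'} = ∑_{s'} P h' (st h') (a h') s' · (V (h'+1) s' − V^π (h'+1) s')
− (V (h'+1) (st (h'+1)) − V^π (h'+1) (st (h'+1)))`. -/
theorem stmt_10 {S A : Type*} [Fintype S] [Fintype A] [Nonempty A]
    (H : ℕ) (P : ℕ → S → A → S → ℝ)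
    (hP0 : ∀ h s a s', 0 ≤ P h s a s')
    (hP1 : ∀ h s a, ∑ s', P h s a s' = 1)
    (r : ℕ → S → A → ℝ) (hr : ∀ h s a, r h s a ∈ Set.Icc (0 : ℝ) 1)
    (Phat : ℕ → S → A → S → ℝ)
    (bon : ℕ → S → A → ℝ) (hbon : ∀ h s a, 0 ≤ bon h s a)
    (Q : ℕ → S → A → ℝ) (V : ℕ → S → ℝ)
    (hVH : ∀ s, V H s = 0)
    (hQ : ∀ h < H, ∀ s a,
      Q h s a = min (r h s a + ∑ s', Phat h s a s' * V (h + 1) s' + bon h s a) (H : ℝ))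
    (hV : ∀ h < H, ∀ s,
      V h s = Finset.univ.sup' Finset.univ_nonempty (fun a => Q h s a))
    (hopt : ∀ h < H, ∀ s a,
      |∑ s', (Phat h s a s' - P h s a s') * V (h + 1) s'| ≤ bon h s a)
    (π : ℕ → S → A) (Vπ : ℕ → S → ℝ) (Qπ : ℕ → S → A → ℝ)
    (hVπH : ∀ s, Vπ H s = 0)
    (hQπ : ∀ h < H, ∀ s a, Qπ h s a = r h s a + ∑ s', P h s a s' * Vπ (h + 1) s')
    (hVπ : ∀ h < H, ∀ s, Vπ h s = Qπ h s (π h s))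
    (hgreedy : ∀ h < H, ∀ s,
      Q h s (π h s) = Finset.univ.sup' Finset.univ_nonempty (fun a => Q h s a))
    (st : ℕ → S) :
    ∀ h < H,
      Q h (st h) (π h (st h)) - Qπ h (st h) (π h (st h)) ≤
        (∑ h' ∈ Finset.Ico h H,
          ((∑ s', P h' (st h') (π h' (st h')) s' * (V (h' + 1) s' - Vπ (h' + 1) s')) -
            (V (h' + 1) (st (h' + 1)) - Vπ (h' + 1) (st (h' + 1))))) +
        2 * ∑ h' ∈ Finset.Ico h H, bon h' (st h') (π h' (st h')) :=
  stmt_10_general H P r Phat bon Q V hVH hQ hV hopt π Vπ Qπ hVπH hQπ hVπ hgreedy st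
end

section
/- Expected-regret bound by bonuses: consider a finite-horizon episodic MDP, signed transition estimates P̂_h : S × A → (S → ℝ), and bonus functions b_h : S × A → [0,∞). Define V_{H+1} ≡ 0, Q_h(s,a) = min{ r_h(s,a) + ∑_{s'∈S} P̂_h(s'|s,a) V_{h+1}(s') + b_h(s,a), H }, V_h(s) = max_{a∈A} Q_h(s,a), and assume |∑_{s'∈S} (P̂_h(s'|s,a) − P_h(s'|s,a)) V_{h+1}(s')| ≤ b_h(s,a) for all h, s, a. Let π be a greedy policy with respect to Q, i.e. Q_h(s, π_h(s)) = max_a Q_h(s,a) for all h, s. Then V_1(s₁) − V^π_1(s₁) ≤ 2 · E[ ∑_{h=1}^H b_h(s_h, a_h) ], where the expectation is over the random trajectory (s_1, a_1, …, s_H, a_H) with s_1 = s₁, a_h = π_h(s_h), and s_{h+1} distributed according to P_h(·|s_h, a_h). -/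
private def traj {S A : Type*} [Fintype S] [DecidableEq S]
    (P : ℕ → S → A → S → ℝ) (bon : ℕ → S → A → ℝ) (π : ℕ → S → A)
    (n t : ℕ) (s : S) : ℝ :=
  ∑ σ ∈ Finset.univ.filter (fun σ : Fin (n+1) → S => σ 0 = s),
    (∏ h : Fin n, P (t + h) (σ h.castSucc) (π (t + h) (σ h.castSucc)) (σ h.succ)) *
    (∑ h : Fin n, bon (t + h) (σ h.castSucc) (π (t + h) (σ h.castSucc)))

private lemma decomp0 {S : Type*} [Fintype S] [DecidableEq S] {n : ℕ} (s : S)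
    (f : (Fin (n+2) → S) → ℝ) :
    ∑ σ ∈ Finset.univ.filter (fun σ : Fin (n+2) → S => σ 0 = s), f σ
      = ∑ τ : Fin (n+1) → S, f (Fin.cons s τ) := by
  rw [Finset.sum_filter]
  rw [← (Fin.consEquiv (fun _ : Fin (n+2) => S)).sum_comp
    (fun σ => if σ 0 = s then f σ else 0)]
  rw [Fintype.sum_prod_type]
  simp [Fin.consEquiv]

private lemma filter1 {S : Type*} [Fintype S] [DecidableEq S] (s : S) :
    Finset.univ.filter (fun σ : Fin 1 → S => σ 0 = s) = {fun _ => s} := by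
  ext σ
  simp [funext_iff, Fin.forall_fin_one]

private lemma cons_prod {S A : Type*} [Fintype S] [DecidableEq S]
    (P : ℕ → S → A → S → ℝ) (π : ℕ → S → A) {n t : ℕ} (s : S) (τ : Fin (n+1) → S) :
    (∏ h : Fin (n+1), P (t + h) ((Fin.cons s τ : Fin (n+2) → S) h.castSucc)
      (π (t + h) ((Fin.cons s τ : Fin (n+2) → S) h.castSucc))
      ((Fin.cons s τ : Fin (n+2) → S) h.succ))
    = P t s (π t s) (τ 0) *
        ∏ i : Fin n, P (t+1+i) (τ i.castSucc) (π (t+1+i) (τ i.castSucc)) (τ i.succ) := by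
  rw [Fin.prod_univ_succ]
  have hrest : ∀ i : Fin n,
      P (t + ↑(i.succ)) ((Fin.cons s τ : Fin (n+2) → S) i.succ.castSucc)
        (π (t + ↑(i.succ)) ((Fin.cons s τ : Fin (n+2) → S) i.succ.castSucc))
        ((Fin.cons s τ : Fin (n+2) → S) i.succ.succ)
      = P (t+1+↑i) (τ i.castSucc) (π (t+1+↑i) (τ i.castSucc)) (τ i.succ) := by
    intro i
    have h1 : (Fin.cons s τ : Fin (n+2) → S) i.succ.castSucc = τ i.castSucc := by
      rw [← Fin.succ_castSucc]; exact Fin.cons_succ _ _ _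
    have h2 : (Fin.cons s τ : Fin (n+2) → S) i.succ.succ = τ i.succ :=
      Fin.cons_succ _ _ _
    have h3 : t + ↑(i.succ) = t + 1 + ↑i := by rw [Fin.val_succ]; omega
    rw [h1, h2, h3]
  rw [Finset.prod_congr rfl fun i _ => hrest i]
  simp

private lemma cons_sum {S A : Type*} [Fintype S] [DecidableEq S]
    (bon : ℕ → S → A → ℝ) (π : ℕ → S → A) {n t : ℕ} (s : S) (τ : Fin (n+1) → S) :
    (∑ h : Fin (n+1), bon (t + h) ((Fin.cons s τ : Fin (n+2) → S) h.castSucc)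
      (π (t + h) ((Fin.cons s τ : Fin (n+2) → S) h.castSucc)))
    = bon t s (π t s) +
        ∑ i : Fin n, bon (t+1+i) (τ i.castSucc) (π (t+1+i) (τ i.castSucc)) := by
  rw [Fin.sum_univ_succ]
  have hrest : ∀ i : Fin n,
      bon (t + ↑(i.succ)) ((Fin.cons s τ : Fin (n+2) → S) i.succ.castSucc)
        (π (t + ↑(i.succ)) ((Fin.cons s τ : Fin (n+2) → S) i.succ.castSucc))
      = bon (t+1+↑i) (τ i.castSucc) (π (t+1+↑i) (τ i.castSucc)) := by
    intro i
    have h1 : (Fin.cons s τ : Fin (n+2) → S) i.succ.castSucc = τ i.castSucc := by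
      rw [← Fin.succ_castSucc]; exact Fin.cons_succ _ _ _
    have h3 : t + ↑(i.succ) = t + 1 + ↑i := by rw [Fin.val_succ]; omega
    rw [h1, h3]
  rw [Finset.sum_congr rfl fun i _ => hrest i]
  simp

private lemma peel {S A : Type*} [Fintype S] [DecidableEq S]
    (P : ℕ → S → A → S → ℝ) (π : ℕ → S → A) {n t : ℕ} (s : S)
    (g : (Fin (n+1) → S) → ℝ) :
    ∑ τ : Fin (n+1) → S, P t s (π t s) (τ 0) *
      ((∏ i : Fin n, P (t+1+i) (τ i.castSucc) (π (t+1+i) (τ i.castSucc)) (τ i.succ)) * g τ)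
    = ∑ s', P t s (π t s) s' *
        ∑ τ ∈ Finset.univ.filter (fun τ : Fin (n+1) → S => τ 0 = s'),
          (∏ i : Fin n, P (t+1+i) (τ i.castSucc) (π (t+1+i) (τ i.castSucc)) (τ i.succ)) * g τ := by
  rw [← Finset.sum_fiberwise_of_maps_to (g := fun τ : Fin (n+1) → S => τ 0)
    (fun τ _ => Finset.mem_univ (τ 0))]
  refine Finset.sum_congr rfl fun s' _ => ?_
  rw [Finset.mul_sum]
  refine Finset.sum_congr rfl fun τ hτ => ?_
  rw [(Finset.mem_filter.mp hτ).2]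

private lemma mass_eq_one {S A : Type*} [Fintype S] [DecidableEq S]
    (P : ℕ → S → A → S → ℝ) (hP1 : ∀ h s a, ∑ s', P h s a s' = 1)
    (π : ℕ → S → A) :
    ∀ n t (s : S),
      (∑ σ ∈ Finset.univ.filter (fun σ : Fin (n+1) → S => σ 0 = s),
        ∏ h : Fin n, P (t + h) (σ h.castSucc) (π (t + h) (σ h.castSucc)) (σ h.succ)) = 1 := by
  intro n
  induction n with
  | zero =>
    intro t s
    simp [filter1]
  | succ n ih =>
    intro t s
    rw [decomp0]
    have key : ∀ τ : Fin (n+1) → S,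
        (∏ h : Fin (n+1), P (t + h) ((Fin.cons s τ : Fin (n+2) → S) h.castSucc)
          (π (t + h) ((Fin.cons s τ : Fin (n+2) → S) h.castSucc))
          ((Fin.cons s τ : Fin (n+2) → S) h.succ))
        = P t s (π t s) (τ 0) *
          ((∏ i : Fin n, P (t+1+i) (τ i.castSucc) (π (t+1+i) (τ i.castSucc)) (τ i.succ)) * 1) := by
      intro τ; rw [cons_prod, mul_one]
    rw [Fintype.sum_congr _ _ key, peel]
    have inner : ∀ s' : S,
        (∑ τ ∈ Finset.univ.filter (fun τ : Fin (n+1) → S => τ 0 = s'),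
          (∏ i : Fin n, P (t+1+i) (τ i.castSucc) (π (t+1+i) (τ i.castSucc)) (τ i.succ)) * 1)
        = 1 := by
      intro s'
      simp only [mul_one]
      exact ih (t+1) s'
    rw [Finset.sum_congr rfl fun s' _ => by rw [inner s', mul_one], hP1]

private lemma bonus_rec {S A : Type*} [Fintype S] [DecidableEq S]
    (P : ℕ → S → A → S → ℝ) (hP1 : ∀ h s a, ∑ s', P h s a s' = 1)
    (bon : ℕ → S → A → ℝ) (π : ℕ → S → A) (n t : ℕ) (s : S) :
    traj P bon π (n+1) t s
      = bon t s (π t s) + ∑ s', P t s (π t s) s' * traj P bon π n (t+1) s' := by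
  simp only [traj]
  rw [decomp0]
  have key : ∀ τ : Fin (n+1) → S,
      ((∏ h : Fin (n+1), P (t + h) ((Fin.cons s τ : Fin (n+2) → S) h.castSucc)
          (π (t + h) ((Fin.cons s τ : Fin (n+2) → S) h.castSucc))
          ((Fin.cons s τ : Fin (n+2) → S) h.succ)) *
        (∑ h : Fin (n+1), bon (t + h) ((Fin.cons s τ : Fin (n+2) → S) h.castSucc)
          (π (t + h) ((Fin.cons s τ : Fin (n+2) → S) h.castSucc))))
      = P t s (π t s) (τ 0) *
          ((∏ i : Fin n, P (t+1+i) (τ i.castSucc) (π (t+1+i) (τ i.castSucc)) (τ i.succ)) *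
            (fun _ : Fin (n+1) → S => bon t s (π t s)) τ)
        + P t s (π t s) (τ 0) *
          ((∏ i : Fin n, P (t+1+i) (τ i.castSucc) (π (t+1+i) (τ i.castSucc)) (τ i.succ)) *
            (fun τ : Fin (n+1) → S =>
              ∑ i : Fin n, bon (t+1+i) (τ i.castSucc) (π (t+1+i) (τ i.castSucc))) τ) := by
    intro τ
    rw [cons_prod, cons_sum]
    ring
  rw [Fintype.sum_congr _ _ key, Finset.sum_add_distrib, peel, peel]
  congr 1
  have inner : ∀ s' : S,
        (∑ τ ∈ Finset.univ.filter (fun τ : Fin (n+1) → S => τ 0 = s'),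
          (∏ i : Fin n, P (t+1+i) (τ i.castSucc) (π (t+1+i) (τ i.castSucc)) (τ i.succ)) *
            bon t s (π t s))
        = bon t s (π t s) := by
      intro s'
      rw [← Finset.sum_mul, mass_eq_one P hP1 π n (t+1) s', one_mul]
  rw [Finset.sum_congr rfl fun s' _ => by rw [inner s'], ← Finset.sum_mul, hP1, one_mul]

/-- **Expected-regret bound by bonuses.** In a finite-horizon episodic MDP (steps
`1, …, H` indexed by `0, …, H-1`), with optimistic iterates `Q`, `V` as before and a
greedy policy `π`, the regret of `π` against the optimistic value is bounded by twice
the expected sum of bonuses along the trajectory generated by `π`. Trajectories are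
encoded as `σ : Fin (H+1) → S` with `σ 0 = s₁`, weighted by the product of transition
probabilities. -/
theorem stmt_11 {S A : Type*} [Fintype S] [DecidableEq S] [Fintype A] [Nonempty A]
    (H : ℕ) (P : ℕ → S → A → S → ℝ)
    (hP0 : ∀ h s a s', 0 ≤ P h s a s')
    (hP1 : ∀ h s a, ∑ s', P h s a s' = 1)
    (r : ℕ → S → A → ℝ) (hr : ∀ h s a, r h s a ∈ Set.Icc (0 : ℝ) 1)
    (s₁ : S)
    (Phat : ℕ → S → A → S → ℝ)
    (bon : ℕ → S → A → ℝ) (hbon : ∀ h s a, 0 ≤ bon h s a)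
    (Q : ℕ → S → A → ℝ) (V : ℕ → S → ℝ)
    (hVH : ∀ s, V H s = 0)
    (hQ : ∀ h < H, ∀ s a,
      Q h s a = min (r h s a + ∑ s', Phat h s a s' * V (h + 1) s' + bon h s a) (H : ℝ))
    (hV : ∀ h < H, ∀ s,
      V h s = Finset.univ.sup' Finset.univ_nonempty (fun a => Q h s a))
    (hopt : ∀ h < H, ∀ s a,
      |∑ s', (Phat h s a s' - P h s a s') * V (h + 1) s'| ≤ bon h s a)
    (π : ℕ → S → A) (Vπ : ℕ → S → ℝ) (Qπ : ℕ → S → A → ℝ)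
    (hVπH : ∀ s, Vπ H s = 0)
    (hQπ : ∀ h < H, ∀ s a, Qπ h s a = r h s a + ∑ s', P h s a s' * Vπ (h + 1) s')
    (hVπ : ∀ h < H, ∀ s, Vπ h s = Qπ h s (π h s))
    (hgreedy : ∀ h < H, ∀ s,
      Q h s (π h s) = Finset.univ.sup' Finset.univ_nonempty (fun a => Q h s a)) :
    V 0 s₁ - Vπ 0 s₁ ≤
      2 * ∑ σ ∈ Finset.univ.filter (fun σ : Fin (H + 1) → S => σ 0 = s₁),
        (∏ h : Fin H, P (h : ℕ) (σ h.castSucc) (π (h : ℕ) (σ h.castSucc)) (σ h.succ)) *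
        (∑ h : Fin H, bon (h : ℕ) (σ h.castSucc) (π (h : ℕ) (σ h.castSucc))) := by
  have main : ∀ n t, t + n = H → ∀ s : S, V t s - Vπ t s ≤ 2 * traj P bon π n t s := by
    intro n
    induction n with
    | zero =>
      intro t ht s
      have : t = H := by omega
      subst this
      simp [traj, hVH, hVπH]
    | succ n ih =>
      intro t ht s
      have htH : t < H := by omega
      have hQle : Q t s (π t s) ≤ r t s (π t s) +
          ∑ s', Phat t s (π t s) s' * V (t+1) s' + bon t s (π t s) := by
        rw [hQ t htH]; exact min_le_left _ _
      have hVeq : V t s = Q t s (π t s) := by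
        rw [hV t htH]; exact (hgreedy t htH s).symm
      have hVπeq : Vπ t s = r t s (π t s) + ∑ s', P t s (π t s) s' * Vπ (t+1) s' := by
        rw [hVπ t htH, hQπ t htH]
      have hsplit : ∑ s', Phat t s (π t s) s' * V (t+1) s'
            - ∑ s', P t s (π t s) s' * Vπ (t+1) s'
          = (∑ s', (Phat t s (π t s) s' - P t s (π t s) s') * V (t+1) s')
            + ∑ s', P t s (π t s) s' * (V (t+1) s' - Vπ (t+1) s') := by
        rw [← Finset.sum_sub_distrib, ← Finset.sum_add_distrib]
        exact Finset.sum_congr rfl fun s' _ => by ring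
      have h1 : ∑ s', (Phat t s (π t s) s' - P t s (π t s) s') * V (t+1) s'
          ≤ bon t s (π t s) := (abs_le.mp (hopt t htH s (π t s))).2
      have h2 : ∑ s', P t s (π t s) s' * (V (t+1) s' - Vπ (t+1) s')
          ≤ ∑ s', P t s (π t s) s' * (2 * traj P bon π n (t+1) s') :=
        Finset.sum_le_sum fun s' _ =>
          mul_le_mul_of_nonneg_left (ih (t+1) (by omega) s') (hP0 t s (π t s) s')
      have h3 : ∑ s', P t s (π t s) s' * (2 * traj P bon π n (t+1) s')
          = 2 * ∑ s', P t s (π t s) s' * traj P bon π n (t+1) s' := by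
        rw [Finset.mul_sum]
        exact Finset.sum_congr rfl fun s' _ => by ring
      have hrec := bonus_rec P hP1 bon π n t s
      linarith
  have hmain := main H 0 (by omega) s₁
  have htraj : traj P bon π H 0 s₁ =
      ∑ σ ∈ Finset.univ.filter (fun σ : Fin (H + 1) → S => σ 0 = s₁),
        (∏ h : Fin H, P (h : ℕ) (σ h.castSucc) (π (h : ℕ) (σ h.castSucc)) (σ h.succ)) *
        (∑ h : Fin H, bon (h : ℕ) (σ h.castSucc) (π (h : ℕ) (σ h.castSucc))) := by
    simp only [traj, Nat.zero_add]
  rw [htraj] at hmain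
  exact hmain
end

section
/- Freedman's inequality: let (Y_i)_{i=0}^n be a real-valued martingale with respect to a filtration (F_i) on a probability space, with difference sequence X_i = Y_i − Y_{i−1}. Suppose |X_i| ≤ R almost surely for all i ∈ {1,…,n}, and suppose σ² ≥ 0 is a number such that ∑_{i=1}^n E[X_i² | F_{i−1}] ≤ σ² almost surely. Then for all t ≥ 0: P( |Y_n − Y_0| ≥ t ) ≤ 2·exp( −(t²/2) / (σ² + R t / 3) ). -/
open MeasureTheory

lemma fact_ge : ∀ k : ℕ, 2 * 3 ^ k ≤ Nat.factorial (k + 2) := by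
  intro k
  induction k with
  | zero => norm_num [Nat.factorial]
  | succ k ih =>
    have : Nat.factorial (k + 3) = (k + 3) * Nat.factorial (k + 2) := rfl
    rw [this, pow_succ]
    calc 2 * (3 ^ k * 3) = 3 * (2 * 3 ^ k) := by ring
    _ ≤ (k + 3) * Nat.factorial (k + 2) := by
        exact Nat.mul_le_mul (by omega) ih

lemma L1 (x u : ℝ) (hx : |x| ≤ u) (hu : u < 3) :
    Real.exp x ≤ 1 + x + x ^ 2 * (1 / (2 * (1 - u / 3))) := by
  have hu0 : 0 ≤ u := le_trans (abs_nonneg x) hx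
  have hsum : Summable (fun n : ℕ => x ^ n / n.factorial) :=
    Real.summable_pow_div_factorial x
  have hexp : Real.exp x = ∑' n : ℕ, x ^ n / n.factorial := by
    rw [Real.exp_eq_exp_ℝ, NormedSpace.exp_eq_tsum_div]
  have hu3 : u / 3 < 1 := by linarith
  have hu30 : 0 ≤ u / 3 := by linarith
  have hgeom : Summable (fun k : ℕ => x ^ 2 / 2 * (u / 3) ^ k) :=
    (summable_geometric_of_lt_one hu30 hu3).mul_left _
  have hterm : ∀ k : ℕ, x ^ (k + 2) / (k + 2).factorial ≤ x ^ 2 / 2 * (u / 3) ^ k := by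
    intro k
    have h1 : |x ^ (k + 2)| ≤ x ^ 2 * u ^ k := by
      rw [abs_pow]
      calc |x| ^ (k + 2) = |x| ^ 2 * |x| ^ k := by ring
      _ ≤ x ^ 2 * u ^ k := by
          rw [sq_abs]
          exact mul_le_mul_of_nonneg_left (pow_le_pow_left₀ (abs_nonneg x) hx k)
            (sq_nonneg x)
    have h2 : (2 * 3 ^ k : ℝ) ≤ (k + 2).factorial := by
      exact_mod_cast fact_ge k
    have h3 : (0:ℝ) < 2 * 3 ^ k := by positivity
    calc x ^ (k + 2) / (k + 2).factorial ≤ |x ^ (k + 2)| / (k + 2).factorial := by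
          exact div_le_div_of_nonneg_right (le_abs_self _) (by positivity)
    _ ≤ (x ^ 2 * u ^ k) / (2 * 3 ^ k) := by
        apply div_le_div₀ (by positivity) h1 h3 h2
    _ = x ^ 2 / 2 * (u / 3) ^ k := by
        rw [div_pow]; ring
  have hsplit : Real.exp x = 1 + x + ∑' k : ℕ, x ^ (k + 2) / (k + 2).factorial := by
    rw [hexp, Summable.tsum_eq_zero_add hsum, Summable.tsum_eq_zero_add (by
      simpa using (summable_nat_add_iff 1).mpr hsum)]
    simp [Nat.factorial]
    ring
  rw [hsplit]
  have htail : ∑' k : ℕ, x ^ (k + 2) / (k + 2).factorial ≤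
      x ^ 2 * (1 / (2 * (1 - u / 3))) := by
    calc ∑' k : ℕ, x ^ (k + 2) / (k + 2).factorial
        ≤ ∑' k : ℕ, x ^ 2 / 2 * (u / 3) ^ k :=
          Summable.tsum_le_tsum hterm ((summable_nat_add_iff 2).mpr hsum) hgeom
    _ = x ^ 2 / 2 * (1 - u / 3)⁻¹ := by
        rw [tsum_mul_left, tsum_geometric_of_lt_one hu30 hu3]
    _ = x ^ 2 * (1 / (2 * (1 - u / 3))) := by
        field_simp
  linarith

lemma L2 {Ω : Type*} {mΩ : MeasurableSpace Ω} {μ : Measure Ω} [IsProbabilityMeasure μ]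
    {m : MeasurableSpace Ω} (hm : m ≤ mΩ) {X : Ω → ℝ} (hX : StronglyMeasurable[mΩ] X)
    {R lam c : ℝ} (hRb : ∀ᵐ ω ∂μ, |X ω| ≤ R)
    (hzero : μ[X|m] =ᵐ[μ] 0)
    (hc : ∀ x : ℝ, |x| ≤ R → Real.exp (lam * x) ≤ 1 + lam * x + (lam * x) ^ 2 * c) :
    μ[fun ω => Real.exp (lam * X ω) | m] ≤ᵐ[μ]
      fun ω => Real.exp (c * lam ^ 2 * (μ[fun ω' => X ω' ^ 2 | m]) ω) := by
  have hR0 : 0 ≤ R := by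
    obtain ⟨ω, hω⟩ := hRb.exists
    exact le_trans (abs_nonneg _) hω
  have hXint : Integrable X μ :=
    Integrable.mono' (integrable_const R) (hX.aestronglyMeasurable (μ := μ))
      (hRb.mono fun ω h => by simpa using h)
  have hX2int : Integrable (fun ω => X ω ^ 2) μ :=
    Integrable.mono' (integrable_const (R ^ 2)) ((hX.pow 2).aestronglyMeasurable (μ := μ))
      (hRb.mono fun ω h => by
        rw [Real.norm_eq_abs, abs_pow]
        exact pow_le_pow_left₀ (abs_nonneg _) h 2)
  have hexpint : Integrable (fun ω => Real.exp (lam * X ω)) μ :=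
    Integrable.mono' (integrable_const (Real.exp (|lam| * R)))
      ((Real.continuous_exp.comp_stronglyMeasurable (hX.const_mul lam)).aestronglyMeasurable)
      (hRb.mono fun ω h => by
        rw [Real.norm_eq_abs, abs_of_pos (Real.exp_pos _), Real.exp_le_exp]
        calc lam * X ω ≤ |lam * X ω| := le_abs_self _
        _ = |lam| * |X ω| := abs_mul _ _
        _ ≤ |lam| * R := by gcongr)
  have hlin : Integrable (fun ω => 1 + lam * X ω + (lam * X ω) ^ 2 * c) μ := by
    apply Integrable.add
    · exact (integrable_const 1).add (hXint.const_mul lam)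
    · have : (fun ω => (lam * X ω) ^ 2 * c) = fun ω => (lam ^ 2 * c) * X ω ^ 2 := by
        funext ω; ring
      rw [this]
      exact hX2int.const_mul _
  have h1 : μ[fun ω => Real.exp (lam * X ω) | m] ≤ᵐ[μ]
      μ[fun ω => 1 + lam * X ω + (lam * X ω) ^ 2 * c | m] :=
    condExp_mono hexpint hlin (hRb.mono fun ω h => hc _ h)
  have h2 : μ[fun ω => 1 + lam * X ω + (lam * X ω) ^ 2 * c | m] =ᵐ[μ]
      fun ω => 1 + lam * (μ[X|m]) ω + lam ^ 2 * c * (μ[fun ω' => X ω' ^ 2|m]) ω := by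
    have e1 : (fun ω => 1 + lam * X ω + (lam * X ω) ^ 2 * c) =
        (fun ω => (1 : ℝ)) + (lam • X + (lam ^ 2 * c) • fun ω => X ω ^ 2) := by
      funext ω; simp [Pi.add_apply]; ring
    rw [e1]
    refine (condExp_add (integrable_const 1) ((hXint.smul lam).add (hX2int.smul _)) m).trans ?_
    rw [condExp_const hm (1 : ℝ)]
    have hadd := (condExp_add (hXint.smul lam) (hX2int.smul (lam ^ 2 * c)) m).trans
        ((condExp_smul (μ := μ) (m := m) lam X).add (condExp_smul (μ := μ) (m := m) (lam ^ 2 * c) (fun ω => X ω ^ 2)))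
    filter_upwards [hadd] with ω h
    simp only [Pi.add_apply, Pi.smul_apply, smul_eq_mul] at h ⊢
    rw [h]; ring
  refine h1.trans ?_
  filter_upwards [hzero, h2] with ω h0 hh
  rw [hh]
  simp only [Pi.zero_apply] at h0
  rw [h0]
  have := Real.add_one_le_exp (c * lam ^ 2 * (μ[fun ω' => X ω' ^ 2|m]) ω)
  linarith

noncomputable def Vd {Ω : Type*} {mΩ : MeasurableSpace Ω} (μ : Measure Ω)
    (𝒢 : Filtration ℕ mΩ) (Y : ℕ → Ω → ℝ) (k : ℕ) (ω : Ω) : ℝ :=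
  ∑ i ∈ Finset.Icc 1 k, (μ[fun ω' => (Y i ω' - Y (i - 1) ω') ^ 2 | 𝒢 (i - 1)]) ω

noncomputable def Md {Ω : Type*} {mΩ : MeasurableSpace Ω} (μ : Measure Ω)
    (𝒢 : Filtration ℕ mΩ) (Y : ℕ → Ω → ℝ) (lam c : ℝ) (k : ℕ) (ω : Ω) : ℝ :=
  Real.exp (lam * (Y k ω - Y 0 ω) - c * lam ^ 2 * Vd μ 𝒢 Y k ω)

lemma int_of_bdd {Ω : Type*} {mΩ : MeasurableSpace Ω} {μ : Measure Ω} [IsFiniteMeasure μ]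
    {f : Ω → ℝ} (hf : AEStronglyMeasurable f μ) {C : ℝ} (h : ∀ᵐ ω ∂μ, |f ω| ≤ C) :
    Integrable f μ :=
  Integrable.mono' (integrable_const C) hf (h.mono fun ω h => by simpa using h)

section L3
variable {Ω : Type*} {mΩ : MeasurableSpace Ω} {μ : Measure Ω}
    [IsProbabilityMeasure μ] {𝒢 : Filtration ℕ mΩ}
    {n : ℕ} {Y : ℕ → Ω → ℝ}

lemma Vd_meas (k : ℕ) : StronglyMeasurable[𝒢 k] (Vd μ 𝒢 Y (k + 1)) := by
  unfold Vd
  exact Finset.stronglyMeasurable_fun_sum _ fun i hi =>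
    stronglyMeasurable_condExp.mono (𝒢.mono (by
      simp only [Finset.mem_Icc] at hi; omega))

lemma Vd_meas0 (k : ℕ) : StronglyMeasurable[mΩ] (Vd μ 𝒢 Y k) := by
  unfold Vd
  exact Finset.stronglyMeasurable_fun_sum _ fun i _ =>
    stronglyMeasurable_condExp.mono (𝒢.le _)

lemma Vd_nonneg (k : ℕ) : ∀ᵐ ω ∂μ, 0 ≤ Vd μ 𝒢 Y k ω := by
  have h : ∀ i : ℕ, ∀ᵐ ω ∂μ,
      0 ≤ (μ[fun ω' => (Y i ω' - Y (i - 1) ω') ^ 2 | 𝒢 (i - 1)]) ω :=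
    fun i => condExp_nonneg (ae_of_all _ fun ω => sq_nonneg _)
  filter_upwards [ae_all_iff.mpr h] with ω hω
  exact Finset.sum_nonneg fun i _ => hω i

lemma incr_bdd {R : ℝ}
    (hbdd : ∀ i ∈ Finset.Icc 1 n, ∀ᵐ ω ∂μ, |Y i ω - Y (i - 1) ω| ≤ R) :
    ∀ k, k ≤ n → ∀ᵐ ω ∂μ, |Y k ω - Y 0 ω| ≤ k * R := by
  intro k
  induction k with
  | zero => intro _; filter_upwards with ω; simp
  | succ k ih =>
    intro hkn
    have hb := hbdd (k + 1) (by simp only [Finset.mem_Icc]; omega)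
    simp only [Nat.add_sub_cancel] at hb
    filter_upwards [ih (by omega), hb] with ω h1 h2
    have e : Y (k + 1) ω - Y 0 ω = (Y (k + 1) ω - Y k ω) + (Y k ω - Y 0 ω) := by ring
    rw [e]
    calc |(Y (k + 1) ω - Y k ω) + (Y k ω - Y 0 ω)|
        ≤ |Y (k + 1) ω - Y k ω| + |Y k ω - Y 0 ω| := abs_add_le _ _
    _ ≤ R + k * R := add_le_add h2 h1
    _ = (k + 1 : ℕ) * R := by push_cast; ring

lemma Md_meas {lam c : ℝ} (hadapt : ∀ i ≤ n, StronglyMeasurable[𝒢 i] (Y i))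
    (k : ℕ) (hk : k ≤ n) : StronglyMeasurable[mΩ] (Md μ 𝒢 Y lam c k) := by
  apply Real.continuous_exp.comp_stronglyMeasurable
  exact ((((hadapt k hk).mono (𝒢.le k)).sub
    ((hadapt 0 (by omega)).mono (𝒢.le 0))).const_mul lam).sub
    ((Vd_meas0 k).const_mul (c * lam ^ 2))

lemma Md_int {R lam c : ℝ} (hadapt : ∀ i ≤ n, StronglyMeasurable[𝒢 i] (Y i))
    (hbdd : ∀ i ∈ Finset.Icc 1 n, ∀ᵐ ω ∂μ, |Y i ω - Y (i - 1) ω| ≤ R)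
    (hc0 : 0 ≤ c) (k : ℕ) (hk : k ≤ n) : Integrable (Md μ 𝒢 Y lam c k) μ := by
  apply int_of_bdd ((Md_meas hadapt k hk).aestronglyMeasurable)
    (C := Real.exp (|lam| * (k * R)))
  filter_upwards [incr_bdd hbdd k hk, Vd_nonneg (μ := μ) (𝒢 := 𝒢) (Y := Y) k] with ω h1 h2
  rw [Md, abs_of_pos (Real.exp_pos _), Real.exp_le_exp]
  have h3 : lam * (Y k ω - Y 0 ω) ≤ |lam| * (k * R) := by
    calc lam * (Y k ω - Y 0 ω) ≤ |lam * (Y k ω - Y 0 ω)| := le_abs_self _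
    _ = |lam| * |Y k ω - Y 0 ω| := abs_mul _ _
    _ ≤ |lam| * (k * R) := by gcongr
  nlinarith [mul_nonneg (mul_nonneg hc0 (sq_nonneg lam)) h2]

lemma L3 (hadapt : ∀ i ≤ n, StronglyMeasurable[𝒢 i] (Y i))
    (hint : ∀ i ≤ n, Integrable (Y i) μ)
    (hmart : ∀ i < n, μ[Y (i + 1) | 𝒢 i] =ᵐ[μ] Y i)
    {R : ℝ} (hR : 0 ≤ R)
    (hbdd : ∀ i ∈ Finset.Icc 1 n, ∀ᵐ ω ∂μ, |Y i ω - Y (i - 1) ω| ≤ R)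
    {lam c : ℝ} (hc0 : 0 ≤ c)
    (hc : ∀ x : ℝ, |x| ≤ R → Real.exp (lam * x) ≤ 1 + lam * x + (lam * x) ^ 2 * c) :
    ∀ k, k ≤ n → ∫ ω, Md μ 𝒢 Y lam c k ω ∂μ ≤ 1 := by
  have hMint : ∀ k, k ≤ n → Integrable (Md μ 𝒢 Y lam c k) μ :=
    fun k hk => Md_int hadapt hbdd hc0 k hk
  intro k
  induction k with
  | zero =>
    intro _
    have hM0 : Md μ 𝒢 Y lam c 0 = fun _ => 1 := by
      funext ω
      simp [Md, Vd, Finset.Icc_eq_empty (by omega : ¬ (1:ℕ) ≤ 0)]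
    rw [hM0]
    simp
  | succ k ih =>
    intro hk1
    have hkn : k ≤ n := by omega
    have hklt : k < n := by omega
    -- the increment
    set X : Ω → ℝ := fun ω => Y (k + 1) ω - Y k ω with hX
    have hb := hbdd (k + 1) (by simp only [Finset.mem_Icc]; omega)
    simp only [Nat.add_sub_cancel] at hb
    have hXb : ∀ᵐ ω ∂μ, |X ω| ≤ R := hb
    have hXmeas : StronglyMeasurable[mΩ] X :=
      ((hadapt (k + 1) hk1).mono (𝒢.le _)).sub ((hadapt k hkn).mono (𝒢.le _))
    have hzero : μ[X | 𝒢 k] =ᵐ[μ] 0 := by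
      have h1 : μ[X | 𝒢 k] =ᵐ[μ] μ[Y (k + 1)|𝒢 k] - μ[Y k|𝒢 k] :=
        condExp_sub (hint (k + 1) hk1) (hint k hkn) (𝒢 k)
      have h3 : μ[Y k|𝒢 k] = Y k :=
        condExp_of_stronglyMeasurable (𝒢.le k) (hadapt k hkn) (hint k hkn)
      filter_upwards [h1, hmart k hklt] with ω e1 e2
      rw [Pi.zero_apply, e1, Pi.sub_apply, h3, e2, sub_self]
    -- conditional second moment
    have hVsucc : ∀ ω, Vd μ 𝒢 Y (k + 1) ω =
        Vd μ 𝒢 Y k ω + (μ[fun ω' => X ω' ^ 2 | 𝒢 k]) ω := by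
      intro ω
      rw [Vd, Finset.sum_Icc_succ_top (by omega : 1 ≤ k + 1)]
      simp only [Nat.add_sub_cancel]
      rfl
    -- L2
    have hL2 := L2 (μ := μ) (𝒢.le k) hXmeas hXb hzero hc
    -- factorization
    set A : Ω → ℝ :=
      fun ω => Real.exp (lam * (Y k ω - Y 0 ω) - c * lam ^ 2 * Vd μ 𝒢 Y (k + 1) ω) with hA
    have hfact : ∀ ω, Md μ 𝒢 Y lam c (k + 1) ω = A ω * Real.exp (lam * X ω) := by
      intro ω
      rw [Md, hA, ← Real.exp_add]
      congr 1
      simp only [hX]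
      ring
    have hAmeas : StronglyMeasurable[𝒢 k] A := by
      apply Real.continuous_exp.comp_stronglyMeasurable
      exact (((hadapt k hkn).sub ((hadapt 0 (by omega)).mono (𝒢.mono (Nat.zero_le k)))).const_mul
        lam).sub ((Vd_meas k).const_mul (c * lam ^ 2))
    have hexpXint : Integrable (fun ω => Real.exp (lam * X ω)) μ := by
      apply int_of_bdd ((Real.continuous_exp.comp_stronglyMeasurable
        (hXmeas.const_mul lam)).aestronglyMeasurable) (C := Real.exp (|lam| * R))
      filter_upwards [hXb] with ω h
      rw [abs_of_pos (Real.exp_pos _), Real.exp_le_exp]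
      calc lam * X ω ≤ |lam * X ω| := le_abs_self _
      _ = |lam| * |X ω| := abs_mul _ _
      _ ≤ |lam| * R := by gcongr
    have hprodint : Integrable (A * fun ω => Real.exp (lam * X ω)) μ := by
      have : (A * fun ω => Real.exp (lam * X ω)) = Md μ 𝒢 Y lam c (k + 1) := by
        funext ω; rw [Pi.mul_apply, hfact]
      rw [this]; exact hMint (k + 1) hk1
    have hpull := condExp_mul_of_stronglyMeasurable_left hAmeas hprodint hexpXint
    have hMeq : Md μ 𝒢 Y lam c (k + 1) = A * fun ω => Real.exp (lam * X ω) := by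
      funext ω; rw [Pi.mul_apply, hfact]
    have key : μ[Md μ 𝒢 Y lam c (k + 1) | 𝒢 k] ≤ᵐ[μ] Md μ 𝒢 Y lam c k := by
      rw [hMeq]
      filter_upwards [hpull, hL2] with ω e1 e2
      rw [e1, Pi.mul_apply]
      calc A ω * (μ[fun ω' => Real.exp (lam * X ω')|𝒢 k]) ω
          ≤ A ω * Real.exp (c * lam ^ 2 * (μ[fun ω' => X ω' ^ 2|𝒢 k]) ω) := by
            apply mul_le_mul_of_nonneg_left e2 (le_of_lt (Real.exp_pos _))
      _ = Md μ 𝒢 Y lam c k ω := by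
          rw [hA, Md, ← Real.exp_add, hVsucc ω]
          congr 1
          ring
    calc ∫ ω, Md μ 𝒢 Y lam c (k + 1) ω ∂μ
        = ∫ ω, (μ[Md μ 𝒢 Y lam c (k + 1) | 𝒢 k]) ω ∂μ :=
          (integral_condExp (𝒢.le k)).symm
    _ ≤ ∫ ω, Md μ 𝒢 Y lam c k ω ∂μ :=
          integral_mono_ae integrable_condExp (hMint k hkn) key
    _ ≤ 1 := ih hkn

end L3
open MeasureTheory
section L4
variable {Ω : Type*} {mΩ : MeasurableSpace Ω} {μ : Measure Ω}
    [IsProbabilityMeasure μ] {𝒢 : Filtration ℕ mΩ}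
    {n : ℕ} {Y : ℕ → Ω → ℝ}

lemma L4 (hadapt : ∀ i ≤ n, StronglyMeasurable[𝒢 i] (Y i))
    (hint : ∀ i ≤ n, Integrable (Y i) μ)
    (hmart : ∀ i < n, μ[Y (i + 1) | 𝒢 i] =ᵐ[μ] Y i)
    {R : ℝ} (hR : 0 ≤ R)
    (hbdd : ∀ i ∈ Finset.Icc 1 n, ∀ᵐ ω ∂μ, |Y i ω - Y (i - 1) ω| ≤ R)
    {σ2 : ℝ} (hσ2 : 0 ≤ σ2)
    (hvar : ∀ᵐ ω ∂μ, ∑ i ∈ Finset.Icc 1 n,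
      (μ[fun ω' => (Y i ω' - Y (i - 1) ω') ^ 2 | 𝒢 (i - 1)]) ω ≤ σ2)
    {lam : ℝ} (hlam : 0 ≤ lam) (hu : lam * R < 3) (t : ℝ) :
    (μ {ω | t ≤ Y n ω - Y 0 ω}).toReal ≤
      Real.exp (-lam * t + lam ^ 2 * σ2 / (2 * (1 - lam * R / 3))) := by
  set c : ℝ := 1 / (2 * (1 - lam * R / 3)) with hcdef
  have hden : 0 < 1 - lam * R / 3 := by linarith
  have hc0 : 0 ≤ c := by positivity
  have hc : ∀ x : ℝ, |x| ≤ R → Real.exp (lam * x) ≤ 1 + lam * x + (lam * x) ^ 2 * c := by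
    intro x hx
    apply L1 (lam * x) (lam * R) ?_ hu
    rw [abs_mul, abs_of_nonneg hlam]
    exact mul_le_mul_of_nonneg_left hx hlam
  have hM := L3 hadapt hint hmart hR hbdd hc0 hc n le_rfl
  have hMint := Md_int (μ := μ) (𝒢 := 𝒢) (lam := lam) (c := c) hadapt hbdd hc0 n le_rfl
  -- the mgf bound
  have hDmeas : StronglyMeasurable[mΩ] (fun ω => Y n ω - Y 0 ω) :=
    ((hadapt n le_rfl).mono (𝒢.le n)).sub ((hadapt 0 (Nat.zero_le n)).mono (𝒢.le 0))
  have hintexp : Integrable (fun ω => Real.exp (lam * (Y n ω - Y 0 ω))) μ := by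
    apply int_of_bdd ((Real.continuous_exp.comp_stronglyMeasurable
      (hDmeas.const_mul lam)).aestronglyMeasurable) (C := Real.exp (|lam| * (n * R)))
    filter_upwards [incr_bdd hbdd n le_rfl] with ω h
    rw [abs_of_pos (Real.exp_pos _), Real.exp_le_exp]
    calc lam * (Y n ω - Y 0 ω) ≤ |lam * (Y n ω - Y 0 ω)| := le_abs_self _
    _ = |lam| * |Y n ω - Y 0 ω| := abs_mul _ _
    _ ≤ |lam| * (n * R) := by gcongr
  have hmgf : ∫ ω, Real.exp (lam * (Y n ω - Y 0 ω)) ∂μ ≤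
      Real.exp (c * lam ^ 2 * σ2) := by
    have hae : ∀ᵐ ω ∂μ, Real.exp (lam * (Y n ω - Y 0 ω)) ≤
        Md μ 𝒢 Y lam c n ω * Real.exp (c * lam ^ 2 * σ2) := by
      filter_upwards [hvar] with ω h
      have hVle : Vd μ 𝒢 Y n ω ≤ σ2 := h
      rw [Md, ← Real.exp_add]
      rw [Real.exp_le_exp]
      nlinarith [mul_nonneg (mul_nonneg hc0 (sq_nonneg lam)) (sub_nonneg.mpr hVle)]
    calc ∫ ω, Real.exp (lam * (Y n ω - Y 0 ω)) ∂μ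
        ≤ ∫ ω, Md μ 𝒢 Y lam c n ω * Real.exp (c * lam ^ 2 * σ2) ∂μ :=
          integral_mono_ae hintexp (hMint.mul_const _) hae
    _ = (∫ ω, Md μ 𝒢 Y lam c n ω ∂μ) * Real.exp (c * lam ^ 2 * σ2) :=
          integral_mul_const _ _
    _ ≤ 1 * Real.exp (c * lam ^ 2 * σ2) := by
          apply mul_le_mul_of_nonneg_right hM (le_of_lt (Real.exp_pos _))
    _ = Real.exp (c * lam ^ 2 * σ2) := one_mul _
  have hcher := ProbabilityTheory.measure_ge_le_exp_mul_mgf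
    (X := fun ω => Y n ω - Y 0 ω) (μ := μ) (t := lam) t hlam hintexp
  calc (μ {ω | t ≤ Y n ω - Y 0 ω}).toReal
      ≤ Real.exp (-lam * t) * ProbabilityTheory.mgf (fun ω => Y n ω - Y 0 ω) μ lam := hcher
  _ ≤ Real.exp (-lam * t) * Real.exp (c * lam ^ 2 * σ2) := by
      apply mul_le_mul_of_nonneg_left ?_ (le_of_lt (Real.exp_pos _))
      exact hmgf
  _ = Real.exp (-lam * t + lam ^ 2 * σ2 / (2 * (1 - lam * R / 3))) := by
      rw [← Real.exp_add]
      congr 1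
      rw [hcdef]
      ring

end L4

/-- **Freedman's inequality.** Let `(Y i)_{i=0}^n` be a real-valued martingale with
respect to the filtration `𝒢` on a probability space, with differences
`X i = Y i − Y (i-1)` bounded by `R` and predictable quadratic variation
`∑_{i=1}^n E[X i ² | 𝒢 (i-1)] ≤ σ²` almost surely. Then for all `t ≥ 0`,
`P(|Y n − Y 0| ≥ t) ≤ 2 exp(−(t²/2) / (σ² + R t / 3))`. -/
theorem stmt_13 {Ω : Type*} {mΩ : MeasurableSpace Ω} (μ : Measure Ω)
    [IsProbabilityMeasure μ] (𝒢 : Filtration ℕ mΩ)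
    (n : ℕ) (Y : ℕ → Ω → ℝ)
    (hadapt : ∀ i ≤ n, StronglyMeasurable[𝒢 i] (Y i))
    (hint : ∀ i ≤ n, Integrable (Y i) μ)
    (hmart : ∀ i < n, μ[Y (i + 1) | 𝒢 i] =ᵐ[μ] Y i)
    (R : ℝ) (hR : 0 ≤ R)
    (hbdd : ∀ i ∈ Finset.Icc 1 n, ∀ᵐ ω ∂μ, |Y i ω - Y (i - 1) ω| ≤ R)
    (σ2 : ℝ) (hσ2 : 0 ≤ σ2)
    (hvar : ∀ᵐ ω ∂μ, ∑ i ∈ Finset.Icc 1 n,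
      (μ[fun ω' => (Y i ω' - Y (i - 1) ω') ^ 2 | 𝒢 (i - 1)]) ω ≤ σ2)
    (t : ℝ) (ht : 0 ≤ t) :
    μ {ω | t ≤ |Y n ω - Y 0 ω|} ≤
      ENNReal.ofReal (2 * Real.exp (-(t ^ 2 / 2) / (σ2 + R * t / 3))) := by
  by_cases hdeg : t = 0 ∨ σ2 + R * t / 3 = 0
  · have hE : -(t ^ 2 / 2) / (σ2 + R * t / 3) = 0 := by
      rcases hdeg with h | h
      · simp [h]
      · simp [h]
    rw [hE, Real.exp_zero, mul_one]
    calc μ {ω | t ≤ |Y n ω - Y 0 ω|} ≤ 1 := prob_le_one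
    _ ≤ ENNReal.ofReal 2 := by
        rw [show (1 : ENNReal) = ENNReal.ofReal 1 by simp]
        exact ENNReal.ofReal_le_ofReal (by norm_num)
  · push_neg at hdeg
    obtain ⟨ht0', hd0'⟩ := hdeg
    have ht0 : 0 < t := lt_of_le_of_ne ht (Ne.symm ht0')
    have hd0 : 0 < σ2 + R * t / 3 :=
      lt_of_le_of_ne (by positivity) (Ne.symm hd0')
    set lam : ℝ := if σ2 = 0 then 3 / (2 * R) else t / (σ2 + R * t / 3) with hlamdef
    obtain ⟨hlam, hu, harith⟩ : 0 ≤ lam ∧ lam * R < 3 ∧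
        -lam * t + lam ^ 2 * σ2 / (2 * (1 - lam * R / 3)) ≤
          -(t ^ 2 / 2) / (σ2 + R * t / 3) := by
      by_cases hs : σ2 = 0
      · have hRpos : 0 < R := by
          rcases lt_or_eq_of_le hR with h | h
          · exact h
          · exfalso; rw [hs, ← h] at hd0; norm_num at hd0
        rw [hlamdef, if_pos hs]
        refine ⟨by positivity, ?_, ?_⟩
        · rw [div_mul_eq_mul_div, mul_comm, mul_div_assoc]
          rw [mul_div_assoc'] at *
          have : R * 3 / (2 * R) = 3 / 2 := by
            field_simp
          rw [this]; norm_num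
        · rw [hs]
          have h1 : (3 / (2 * R)) ^ 2 * 0 / (2 * (1 - 3 / (2 * R) * R / 3)) = 0 := by
            simp
          rw [h1, add_zero]
          have h2 : -(t ^ 2 / 2) / (0 + R * t / 3) = -(3 / (2 * R)) * t := by
            rw [zero_add]
            field_simp
          rw [h2]
      · have hσ2p : 0 < σ2 := lt_of_le_of_ne hσ2 (Ne.symm hs)
        rw [hlamdef, if_neg hs]
        refine ⟨by positivity, ?_, ?_⟩
        · rw [div_mul_eq_mul_div, div_lt_iff₀ hd0]
          nlinarith
        · have h1 : 1 - t / (σ2 + R * t / 3) * R / 3 = σ2 / (σ2 + R * t / 3) := by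
            field_simp
            ring
          rw [h1]
          have h2 : -(t / (σ2 + R * t / 3)) * t +
              (t / (σ2 + R * t / 3)) ^ 2 * σ2 / (2 * (σ2 / (σ2 + R * t / 3))) =
              -(t ^ 2 / 2) / (σ2 + R * t / 3) := by
            field_simp
            ring
          rw [h2]
    -- negated martingale
    have hadaptN : ∀ i ≤ n, StronglyMeasurable[𝒢 i] ((fun j ω => -Y j ω) i) :=
      fun i hi => (hadapt i hi).neg
    have hintN : ∀ i ≤ n, Integrable ((fun j ω => -Y j ω) i) μ :=
      fun i hi => (hint i hi).neg
    have hmartN : ∀ i < n, μ[(fun j ω => -Y j ω) (i + 1) | 𝒢 i] =ᵐ[μ]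
        (fun j ω => -Y j ω) i :=
      fun i hi => (condExp_neg (Y (i + 1)) (𝒢 i)).trans ((hmart i hi).neg)
    have hbddN : ∀ i ∈ Finset.Icc 1 n, ∀ᵐ ω ∂μ,
        |(fun j ω => -Y j ω) i ω - (fun j ω => -Y j ω) (i - 1) ω| ≤ R := by
      intro i hi
      filter_upwards [hbdd i hi] with ω h
      have e : -Y i ω - -Y (i - 1) ω = -(Y i ω - Y (i - 1) ω) := by ring
      simpa only [e, abs_neg] using h
    have hvarN : ∀ᵐ ω ∂μ, ∑ i ∈ Finset.Icc 1 n,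
        (μ[fun ω' => ((fun j ω'' => -Y j ω'') i ω' -
          (fun j ω'' => -Y j ω'') (i - 1) ω') ^ 2 | 𝒢 (i - 1)]) ω ≤ σ2 := by
      have he : ∀ i : ℕ, (fun ω' => (-Y i ω' - -Y (i - 1) ω') ^ 2) =
          (fun ω' => (Y i ω' - Y (i - 1) ω') ^ 2) :=
        fun i => funext fun ω' => by ring
      simpa only [he] using hvar
    have hplus := L4 hadapt hint hmart hR hbdd hσ2 hvar hlam hu t
    have hminus := L4 hadaptN hintN hmartN hR hbddN hσ2 hvarN hlam hu t
    set e : ℝ := -lam * t + lam ^ 2 * σ2 / (2 * (1 - lam * R / 3)) with hedef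
    have hA : μ {ω | t ≤ Y n ω - Y 0 ω} ≤ ENNReal.ofReal (Real.exp e) := by
      rw [← ENNReal.ofReal_toReal (measure_ne_top μ {ω | t ≤ Y n ω - Y 0 ω})]
      exact ENNReal.ofReal_le_ofReal hplus
    have hB : μ {ω | t ≤ -Y n ω - -Y 0 ω} ≤ ENNReal.ofReal (Real.exp e) := by
      rw [← ENNReal.ofReal_toReal (measure_ne_top μ {ω | t ≤ -Y n ω - -Y 0 ω})]
      exact ENNReal.ofReal_le_ofReal hminus
    have hsub : {ω | t ≤ |Y n ω - Y 0 ω|} ⊆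
        {ω | t ≤ Y n ω - Y 0 ω} ∪ {ω | t ≤ -Y n ω - -Y 0 ω} := by
      intro ω hω
      simp only [Set.mem_setOf_eq] at hω
      rcases le_abs.mp hω with h | h
      · exact Or.inl h
      · exact Or.inr (by simp only [Set.mem_setOf_eq]; linarith)
    calc μ {ω | t ≤ |Y n ω - Y 0 ω|}
        ≤ μ ({ω | t ≤ Y n ω - Y 0 ω} ∪ {ω | t ≤ -Y n ω - -Y 0 ω}) := measure_mono hsub
    _ ≤ μ {ω | t ≤ Y n ω - Y 0 ω} + μ {ω | t ≤ -Y n ω - -Y 0 ω} := measure_union_le _ _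
    _ ≤ ENNReal.ofReal (Real.exp e) + ENNReal.ofReal (Real.exp e) := add_le_add hA hB
    _ = ENNReal.ofReal (2 * Real.exp e) := by
        rw [← ENNReal.ofReal_add (Real.exp_pos _).le (Real.exp_pos _).le]
        ring_nf
    _ ≤ ENNReal.ofReal (2 * Real.exp (-(t ^ 2 / 2) / (σ2 + R * t / 3))) := by
        apply ENNReal.ofReal_le_ofReal
        have := Real.exp_le_exp.mpr harith
        linarith
end
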